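/- arXiv:1812.00018 — 8 statements merged into one kernel-verified Lean document; each statement's English description precedes it below -/
import Mathlib

section
/- Let Δ be the block-dephasing map of a projective measurement P. For any density matrix ρ and any block-incoherent density matrix σ (Δ[σ] = σ with σ of full rank or with supp ρ ⊆ supp σ), the quantum relative entropy satisfies S(ρ‖σ) = S(Δ[ρ]) − S(ρ) + S(Δ[ρ]‖σ). Consequently, min over block-incoherent σ of S(ρ‖σ) equals S(Δ[ρ]) − S(ρ), attained at σ = Δ[ρ]. -/
/-!
Write `Δρ = ∑ Pᵢ ρ Pᵢ`. Since `Δσ = σ` and `Δ(Δρ) = Δρ`, both σ and Δρ commute with every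
projector `Pₖ`, hence so do their logarithms (functional calculus). For such an `L`,
`Tr[Δρ L] = Tr[ρ L]`, so `Tr[ρ log σ] = Tr[Δρ log σ]` and `Tr[ρ log Δρ] = Tr[Δρ log Δρ]`, which
gives both identities. The inequality is Klein's inequality `S(Δρ‖σ) ≥ 0`: in eigenbases `aᵢ` of
Δρ and `bⱼ` of σ the overlaps `|⟨aᵢ, bⱼ⟩|²` form a doubly stochastic matrix, which reduces it
to the scalar inequality `p - q ≤ p log p - p log q`.
-/

open Matrix Kronecker Complex ComplexOrder

/-- Von Neumann entropy of a (Hermitian) matrix: S(ρ) = −Σ λ_i log λ_i over the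
eigenvalues of ρ. -/
noncomputable def vN {ι : Type*} [Fintype ι] [DecidableEq ι]
    (ρ : Matrix ι ι ℂ) : ℝ :=
  if h : ρ.IsHermitian then ∑ i, Real.negMulLog (h.eigenvalues i) else 0

/-- Matrix logarithm of a Hermitian matrix, via its spectral decomposition. -/
noncomputable def matLog {d : ℕ} (ρ : Matrix (Fin d) (Fin d) ℂ) :
    Matrix (Fin d) (Fin d) ℂ :=
  if h : ρ.IsHermitian then
    (h.eigenvectorUnitary : Matrix (Fin d) (Fin d) ℂ)
      * Matrix.diagonal (fun i => (Real.log (h.eigenvalues i) : ℂ))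
      * (star (h.eigenvectorUnitary : Matrix (Fin d) (Fin d) ℂ))
  else 0

/-- Quantum relative entropy S(ρ‖σ) = Tr[ρ log ρ − ρ log σ]. -/
noncomputable def relEnt {d : ℕ} (ρ σ : Matrix (Fin d) (Fin d) ℂ) : ℝ :=
  (Matrix.trace (ρ * matLog ρ - ρ * matLog σ)).re

section Pinching

variable {A ι : Type*} [NonUnitalSemiring A] [Fintype ι] [DecidableEq ι] {P : ι → A}

/-- The block-dephasing map `Δ`. -/
def pinch (P : ι → A) (x : A) : A := ∑ i, P i * x * P i

theorem mul_pinch (horth : ∀ i j, P i * P j = if i = j then P i else 0) (x : A) (k : ι) :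
    P k * pinch P x = P k * x * P k := by
  rw [pinch, Finset.mul_sum, Finset.sum_eq_single k]
  · rw [← mul_assoc, ← mul_assoc, horth, if_pos rfl]
  · intro i _ hik
    rw [← mul_assoc, ← mul_assoc, horth, if_neg (Ne.symm hik), zero_mul, zero_mul]
  · simp

theorem pinch_mul (horth : ∀ i j, P i * P j = if i = j then P i else 0) (x : A) (k : ι) :
    pinch P x * P k = P k * x * P k := by
  rw [pinch, Finset.sum_mul, Finset.sum_eq_single k]
  · rw [mul_assoc, horth, if_pos rfl]
  · intro i _ hik
    rw [mul_assoc, horth, if_neg hik, mul_zero]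
  · simp

theorem pinch_pinch (horth : ∀ i j, P i * P j = if i = j then P i else 0) (x : A) :
    pinch P (pinch P x) = pinch P x :=
  Finset.sum_congr rfl fun k _ => by rw [mul_pinch horth, mul_assoc, horth, if_pos rfl]

theorem commute_of_pinch_eq (horth : ∀ i j, P i * P j = if i = j then P i else 0) {x : A}
    (hx : pinch P x = x) (k : ι) : Commute (P k) x :=
  calc P k * x = P k * pinch P x := by rw [hx]
    _ = pinch P x * P k := by rw [mul_pinch horth, pinch_mul horth]
    _ = x * P k := by rw [hx]

end Pinching

namespace Matrix

variable {m R ι : Type*} [Fintype m] [Fintype ι] {P : ι → Matrix m m R}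

theorem trace_pinch_mul [DecidableEq m] [CommSemiring R] [DecidableEq ι]
    (horth : ∀ i j, P i * P j = if i = j then P i else 0) (hsum : ∑ i, P i = 1)
    {L : Matrix m m R} (hL : ∀ k, Commute (P k) L) (x : Matrix m m R) :
    trace (pinch P x * L) = trace (x * L) := by
  have hterm : ∀ i, trace (P i * x * P i * L) = trace (P i * (x * L)) := fun i => by
    rw [mul_assoc _ (P i), (hL i).eq, ← mul_assoc, trace_mul_comm, ← mul_assoc, ← mul_assoc,
      horth, if_pos rfl, mul_assoc]
  rw [pinch, Finset.sum_mul, trace_sum, Finset.sum_congr rfl fun i _ => hterm i, ← trace_sum,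
    ← Finset.sum_mul, hsum, one_mul]

theorem PosSemidef.pinch [Ring R] [PartialOrder R] [StarRing R] [AddLeftMono R]
    (hP : ∀ i, (P i).IsHermitian) {x : Matrix m m R} (hx : x.PosSemidef) :
    (pinch P x).PosSemidef :=
  posSemidef_sum _ fun i _ => by simpa only [(hP i).eq] using hx.mul_mul_conjTranspose_same (P i)

theorem pinch_mulVec_eq_zero [NonUnitalCommSemiring R] {ρ σ : Matrix m m R}
    (hσ : ∀ k, Commute (P k) σ) (hsupp : ∀ v, σ *ᵥ v = 0 → ρ *ᵥ v = 0) {v : m → R}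
    (hv : σ *ᵥ v = 0) : pinch P ρ *ᵥ v = 0 := by
  have hPv : ∀ k, ρ *ᵥ (P k *ᵥ v) = 0 := fun k =>
    hsupp _ (by rw [mulVec_mulVec, ← (hσ k).eq, ← mulVec_mulVec, hv, mulVec_zero])
  simp only [pinch, sum_mulVec, ← mulVec_mulVec, hPv, mulVec_zero, Finset.sum_const_zero]

variable {n : Type*} [Fintype n] [DecidableEq n]

theorem sum_normSq_apply_right {W : Matrix n n ℂ} (hW : W ∈ unitaryGroup n ℂ) (i : n) :
    ∑ j, Complex.normSq (W i j) = 1 := by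
  have h : (W * star W) i i = 1 := by rw [Unitary.mul_star_self_of_mem hW, one_apply_eq]
  simp only [mul_apply, star_apply, RCLike.star_def, Complex.mul_conj] at h
  exact_mod_cast h

theorem sum_normSq_apply_left {W : Matrix n n ℂ} (hW : W ∈ unitaryGroup n ℂ) (j : n) :
    ∑ i, Complex.normSq (W i j) = 1 := by
  simpa [star_apply] using sum_normSq_apply_right (Unitary.star_mem hW) j

theorem trace_conj_diagonal_mul_conj_diagonal {U : Matrix n n ℂ} (hU : U ∈ unitaryGroup n ℂ)
    (V : Matrix n n ℂ) (a b : n → ℂ) :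
    trace (U * diagonal a * star U * (V * diagonal b * star V))
      = ∑ i, ∑ j, a i * b j * Complex.normSq ((star U * V) i j) := by
  have hconj : U * diagonal a * star U * (V * diagonal b * star V)
      = U * (diagonal a * (star U * V * diagonal b * star (star U * V))) * star U := by
    simp only [star_mul, star_star, mul_assoc, Unitary.mul_star_self_of_mem hU, mul_one]
  rw [hconj, trace_mul_cycle, Unitary.star_mul_self_of_mem hU, one_mul]
  generalize star U * V = W
  simp only [trace, diag, diagonal_mul, mul_apply (M := W * diagonal b), mul_diagonal, star_apply,
    Finset.mul_sum]
  refine Finset.sum_congr rfl fun i _ => Finset.sum_congr rfl fun j _ => ?_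
  rw [Complex.normSq_eq_conj_mul_self, RCLike.star_def]
  ring

end Matrix

namespace Matrix.IsHermitian

variable {n : Type*} [Fintype n] [DecidableEq n] {A B : Matrix n n ℂ}

/-- `|⟨aᵢ, bⱼ⟩|²` for the eigenbases `a` of `A` and `b` of `B` chosen by `eigenvectorUnitary`. -/
noncomputable def eigenOverlap (hA : A.IsHermitian) (hB : B.IsHermitian) (i j : n) : ℝ :=
  Complex.normSq ((star (hA.eigenvectorUnitary : Matrix n n ℂ) * hB.eigenvectorUnitary) i j)

theorem eigenOverlap_nonneg (hA : A.IsHermitian) (hB : B.IsHermitian) (i j : n) :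
    0 ≤ hA.eigenOverlap hB i j :=
  Complex.normSq_nonneg _

theorem sum_eigenOverlap_right (hA : A.IsHermitian) (hB : B.IsHermitian) (i : n) :
    ∑ j, hA.eigenOverlap hB i j = 1 :=
  sum_normSq_apply_right (mul_mem (Unitary.star_mem hA.eigenvectorUnitary.2)
    hB.eigenvectorUnitary.2) i

theorem sum_eigenOverlap_left (hA : A.IsHermitian) (hB : B.IsHermitian) (j : n) :
    ∑ i, hA.eigenOverlap hB i j = 1 :=
  sum_normSq_apply_left (mul_mem (Unitary.star_mem hA.eigenvectorUnitary.2)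
    hB.eigenvectorUnitary.2) j

theorem eigenOverlap_self (hA : A.IsHermitian) (i j : n) :
    hA.eigenOverlap hA i j = if i = j then 1 else 0 := by
  rw [eigenOverlap, Unitary.coe_star_mul_self, one_apply]
  split_ifs <;> simp

theorem eigenvalues_mul_eigenOverlap_eq_zero (hA : A.IsHermitian) (hB : B.IsHermitian)
    (hsupp : ∀ v, B *ᵥ v = 0 → A *ᵥ v = 0) {j : n} (hj : hB.eigenvalues j = 0) (i : n) :
    hA.eigenvalues i * hA.eigenOverlap hB i j = 0 := by
  set U : Matrix n n ℂ := (hA.eigenvectorUnitary : Matrix n n ℂ)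
  set V : Matrix n n ℂ := (hB.eigenvectorUnitary : Matrix n n ℂ)
  have hAb : A *ᵥ ⇑(hB.eigenvectorBasis j) = 0 :=
    hsupp _ (by rw [hB.mulVec_eigenvectorBasis, hj, zero_smul])
  set D : Matrix n n ℂ := diagonal (RCLike.ofReal ∘ hA.eigenvalues)
  have hdiag : star U * A = D * star U := by
    conv_lhs => rw [hA.spectral_theorem, Unitary.conjStarAlgAut_apply]
    simp only [U, ← mul_assoc, Unitary.coe_star_mul_self, one_mul]
    rfl
  have hentry : (hA.eigenvalues i : ℂ) * (star U * V) i j = 0 := by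
    have h : D *ᵥ ((star U * V) *ᵥ Pi.single j 1) = 0 := by
      rw [← mulVec_mulVec, eigenvectorUnitary_mulVec, mulVec_mulVec, ← hdiag, ← mulVec_mulVec, hAb,
        mulVec_zero]
    simpa [D, mulVec_single_one, mulVec_diagonal] using congr_fun h i
  rcases mul_eq_zero.1 hentry with h | h
  · simp [Complex.ofReal_eq_zero.1 h]
  · simp [eigenOverlap, U, V, h]

end Matrix.IsHermitian

theorem Real.sub_le_mul_log_sub_mul_log {p q : ℝ} (hp : 0 ≤ p) (hq : 0 ≤ q)
    (hpq : q = 0 → p = 0) : p - q ≤ p * Real.log p - p * Real.log q := by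
  rcases hq.eq_or_lt with rfl | hq
  · simp [hpq rfl]
  rcases hp.eq_or_lt with rfl | hp
  · simpa using hq.le
  have h := mul_le_mul_of_nonneg_left (Real.log_le_sub_one_of_pos (div_pos hq hp)) hp.le
  rw [Real.log_div hq.ne' hp.ne', mul_sub, mul_sub, mul_div_cancel₀ _ hp.ne', mul_one] at h
  linarith

section RelativeEntropy

variable {d : ℕ} {A B ρ σ : Matrix (Fin d) (Fin d) ℂ}

theorem matLog_eq_cfc (hA : A.IsHermitian) : matLog A = cfc Real.log A := by
  rw [hA.cfc_eq, IsHermitian.cfc, matLog, dif_pos hA, Unitary.conjStarAlgAut_apply]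
  rfl

theorem Commute.matLog_right (h : Commute A B) : Commute A (matLog B) := by
  by_cases hB : B.IsHermitian
  · rw [matLog_eq_cfc hB]
    exact (h.symm.cfc_real _).symm
  · rw [matLog, dif_neg hB]
    exact Commute.zero_right A

theorem trace_mul_matLog (hA : A.IsHermitian) (hB : B.IsHermitian) :
    trace (A * matLog B) = ((∑ i, ∑ j, hA.eigenvalues i * Real.log (hB.eigenvalues j)
      * hA.eigenOverlap hB i j : ℝ) : ℂ) := by
  conv_lhs => rw [hA.spectral_theorem, matLog, dif_pos hB, Unitary.conjStarAlgAut_apply]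
  rw [trace_conj_diagonal_mul_conj_diagonal hA.eigenvectorUnitary.2]
  push_cast
  rfl

theorem re_trace_mul_matLog_self (hA : A.IsHermitian) : (trace (A * matLog A)).re = -vN A := by
  rw [trace_mul_matLog hA hA, Complex.ofReal_re, vN, dif_pos hA]
  simp [IsHermitian.eigenOverlap_self, Real.negMulLog]

theorem relEnt_eq_neg_vN_sub (hρ : ρ.IsHermitian) (σ : Matrix (Fin d) (Fin d) ℂ) :
    relEnt ρ σ = -vN ρ - (trace (ρ * matLog σ)).re := by
  rw [relEnt, trace_sub, Complex.sub_re, re_trace_mul_matLog_self hρ]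

theorem re_trace_sub_le_relEnt (hρ : ρ.PosSemidef) (hσ : σ.PosSemidef)
    (hsupp : ∀ v, σ *ᵥ v = 0 → ρ *ᵥ v = 0) : (ρ.trace - σ.trace).re ≤ relEnt ρ σ := by
  set p := hρ.1.eigenvalues
  set q := hσ.1.eigenvalues
  set c := hρ.1.eigenOverlap hσ.1
  have hrow : ∀ i, ∑ j, c i j = 1 := hρ.1.sum_eigenOverlap_right hσ.1
  have hcol : ∀ j, ∑ i, c i j = 1 := hρ.1.sum_eigenOverlap_left hσ.1
  have htr : (ρ.trace - σ.trace).re = ∑ i, ∑ j, c i j * (p i - q j) := by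
    rw [hρ.1.trace_eq_sum_eigenvalues, hσ.1.trace_eq_sum_eigenvalues]
    simp only [mul_sub, Finset.sum_sub_distrib, ← Finset.sum_mul, hrow, one_mul]
    rw [Finset.sum_comm (f := fun i j => c i j * q j)]
    simp only [← Finset.sum_mul, hcol, one_mul, Complex.sub_re, Complex.re_sum]
    rfl
  have hrel : relEnt ρ σ = ∑ i, ∑ j, c i j * (p i * Real.log (p i) - p i * Real.log (q j)) := by
    rw [relEnt_eq_neg_vN_sub hρ.1, trace_mul_matLog hρ.1 hσ.1, Complex.ofReal_re, vN,
      dif_pos hρ.1]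
    simp only [mul_sub, Finset.sum_sub_distrib, ← Finset.sum_mul, hrow, one_mul, Real.negMulLog,
      neg_mul, Finset.sum_neg_distrib, neg_neg]
    exact congrArg _ (Finset.sum_congr rfl fun i _ => Finset.sum_congr rfl fun j _ => mul_comm _ _)
  rw [htr, hrel]
  refine Finset.sum_le_sum fun i _ => Finset.sum_le_sum fun j _ => ?_
  rcases (show 0 ≤ c i j from hρ.1.eigenOverlap_nonneg hσ.1 i j).eq_or_lt with hc | hc
  · rw [← hc, zero_mul, zero_mul]
  refine mul_le_mul_of_nonneg_left (Real.sub_le_mul_log_sub_mul_log (hρ.eigenvalues_nonneg i)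
    (hσ.eigenvalues_nonneg j) fun hq => ?_) hc.le
  exact (mul_eq_zero.1 (hρ.1.eigenvalues_mul_eigenOverlap_eq_zero hσ.1 hsupp hq i)).resolve_right
    hc.ne'

end RelativeEntropy

/-- For any density matrix ρ and any block-incoherent density
matrix σ with supp ρ ⊆ supp σ, S(ρ‖σ) = S(Δ[ρ]) − S(ρ) + S(Δ[ρ]‖σ).
Consequently the minimum of S(ρ‖σ) over block-incoherent σ equals
S(Δ[ρ]) − S(ρ), attained at σ = Δ[ρ]. -/
theorem relEnt_block_coherence (d n : ℕ)
    (P : Fin n → Matrix (Fin d) (Fin d) ℂ)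
    (hHerm : ∀ i, (P i).IsHermitian)
    (horth : ∀ i j, P i * P j = if i = j then P i else 0)
    (hsum : ∑ i, P i = 1)
    (ρ : Matrix (Fin d) (Fin d) ℂ) (hρ : ρ.PosSemidef) (htrρ : ρ.trace = 1)
    (σ : Matrix (Fin d) (Fin d) ℂ) (hσ : σ.PosSemidef) (htrσ : σ.trace = 1)
    (hinc : (∑ i, P i * σ * P i) = σ)
    (hsupp : ∀ v : Fin d → ℂ, σ *ᵥ v = 0 → ρ *ᵥ v = 0) :
    relEnt ρ σ = vN (∑ i, P i * ρ * P i) - vN ρ + relEnt (∑ i, P i * ρ * P i) σ ∧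
    relEnt ρ (∑ i, P i * ρ * P i) = vN (∑ i, P i * ρ * P i) - vN ρ ∧
    vN (∑ i, P i * ρ * P i) - vN ρ ≤ relEnt ρ σ := by
  rw [show ∑ i, P i * ρ * P i = pinch P ρ from rfl]
  have hΔ : (pinch P ρ).PosSemidef := hρ.pinch hHerm
  have hσP : ∀ k, Commute (P k) σ := commute_of_pinch_eq horth hinc
  have hΔP : ∀ k, Commute (P k) (pinch P ρ) := commute_of_pinch_eq horth (pinch_pinch horth ρ)
  have htrΔ : (pinch P ρ).trace = 1 := by
    simpa [htrρ] using trace_pinch_mul horth hsum (fun k => Commute.one_right (P k)) ρ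
  have hlogσ : trace (pinch P ρ * matLog σ) = trace (ρ * matLog σ) :=
    trace_pinch_mul horth hsum (fun k => (hσP k).matLog_right) ρ
  have hlogΔ : trace (pinch P ρ * matLog (pinch P ρ)) = trace (ρ * matLog (pinch P ρ)) :=
    trace_pinch_mul horth hsum (fun k => (hΔP k).matLog_right) ρ
  have hklein := re_trace_sub_le_relEnt hΔ hσ fun v => pinch_mulVec_eq_zero hσP hsupp
  rw [htrΔ, htrσ, sub_self, Complex.zero_re] at hklein
  have hsplit : relEnt ρ σ = vN (pinch P ρ) - vN ρ + relEnt (pinch P ρ) σ := by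
    rw [relEnt_eq_neg_vN_sub hρ.1, relEnt_eq_neg_vN_sub hΔ.1, hlogσ]
    ring
  refine ⟨hsplit, ?_, by linarith⟩
  rw [relEnt_eq_neg_vN_sub hρ.1, ← hlogΔ, re_trace_mul_matLog_self hΔ.1]
  ring
end

section
/- Let {E_i}_{i=1}^n be a POVM with measurement operators A_i (E_i = A_i†A_i), p_i(ρ) = Tr[E_i ρ], and ρ_i = A_i ρ A_i†/p_i when p_i > 0. Then the relative entropy of POVM-based coherence satisfies C_rel(ρ, E) = S(Σ_i A_i ρ A_i† ⊗ |i⟩⟨i|) − S(ρ) = H({p_i(ρ)}) + Σ_i p_i(ρ) S(ρ_i) − S(ρ), where H is the Shannon entropy. -/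
open Matrix Kronecker Complex ComplexOrder

/-!
The block-dephasing `∑ₖ Pₖ (ρ ⊗ |0⟩⟨0|) Pₖ` is the unitary conjugate `V† (∑ᵢ Aᵢ ρ Aᵢ† ⊗ |i⟩⟨i|) V`,
because `V (ρ ⊗ |0⟩⟨0|) V† = ∑ᵢⱼ Aᵢ ρ Aⱼ† ⊗ |i⟩⟨j|` and compressing by `1 ⊗ |k⟩⟨k|` keeps only the
`(k, k)` block. The entropy is unitarily invariant and additive over block-diagonal matrices (both
seen on characteristic polynomials), which gives the first equality. Writing each block as
`pᵢ ρᵢ` and using `S(p σ) = p S(σ) − p log p · tr σ` gives the second.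
-/

open Polynomial

namespace Matrix

section Kronecker

variable {ι κ α : Type*} [DecidableEq κ]

theorem kronecker_single_self [Semiring α] (A : Matrix ι ι α) (k : κ) :
    A ⊗ₖ single k k (1 : α) = blockDiagonal (Pi.single k A) := by
  rw [← diagonal_single, kronecker_diagonal]
  congr 1
  ext l : 1
  by_cases h : l = k
  · subst h; simp
  · simp [h]

theorem sum_kronecker_single_self [Fintype κ] [Semiring α] (B : κ → Matrix ι ι α) :
    ∑ k, B k ⊗ₖ single k k (1 : α) = blockDiagonal B := by
  simp_rw [kronecker_single_self, ← blockDiagonalAddMonoidHom_apply, ← map_sum,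
    Finset.univ_sum_single]

variable [Fintype ι] [DecidableEq ι] [Fintype κ]

theorem one_kronecker_single_mul_mul_kronecker_single [CommSemiring α] (k i j : κ)
    (X : Matrix ι ι α) :
    ((1 : Matrix ι ι α) ⊗ₖ single k k 1) * (X ⊗ₖ single i j 1) * (1 ⊗ₖ single k k 1) =
      if i = k ∧ j = k then X ⊗ₖ single k k 1 else 0 := by
  rw [← mul_kronecker_mul, ← mul_kronecker_mul, Matrix.one_mul, Matrix.mul_one,
    single_mul_mul_single, single_apply]
  split_ifs <;> simp

theorem sum_one_kronecker_single_mul_mul [CommSemiring α]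
    (B : κ → κ → Matrix ι ι α) :
    ∑ k, ((1 : Matrix ι ι α) ⊗ₖ single k k 1) * (∑ i, ∑ j, B i j ⊗ₖ single i j 1) *
        (1 ⊗ₖ single k k 1) = ∑ k, B k k ⊗ₖ single k k 1 := by
  simp [Finset.mul_sum, Finset.sum_mul, one_kronecker_single_mul_mul_kronecker_single, ite_and]

end Kronecker

variable {ι κ : Type*} [Fintype ι] [DecidableEq ι] [Fintype κ] [DecidableEq κ]

theorem charmatrix_blockDiagonal {R : Type*} [CommRing R] (B : κ → Matrix ι ι R) :
    charmatrix (blockDiagonal B) = blockDiagonal fun k => charmatrix (B k) := by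
  ext ⟨i, k⟩ ⟨j, l⟩
  simp only [charmatrix_apply, blockDiagonal_apply, diagonal_apply, Prod.mk.injEq]
  split_ifs <;> simp_all

theorem charpoly_blockDiagonal {R : Type*} [CommRing R] (B : κ → Matrix ι ι R) :
    (blockDiagonal B).charpoly = ∏ k, (B k).charpoly := by
  rw [charpoly, charmatrix_blockDiagonal, det_blockDiagonal]
  rfl

end Matrix

section Entropy

variable {ι κ : Type*} [Fintype ι] [DecidableEq ι] [Fintype κ] [DecidableEq κ]

theorem vN_eq_sum_roots_charpoly {M : Matrix ι ι ℂ} (hM : M.IsHermitian) :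
    vN M = (M.charpoly.roots.map fun z => Real.negMulLog z.re).sum := by
  rw [vN, dif_pos hM, hM.roots_charpoly_eq_eigenvalues, Multiset.map_map]
  rfl

theorem vN_zero : vN (0 : Matrix ι ι ℂ) = 0 := by
  rw [vN, dif_pos isHermitian_zero, isHermitian_zero.eigenvalues_eq_zero_iff.mpr rfl]
  simp

theorem vN_conjTranspose_mul_mul {M U : Matrix ι ι ℂ} (hM : M.IsHermitian) (hU : Uᴴ * U = 1) :
    vN (Uᴴ * M * U) = vN M := by
  rw [vN_eq_sum_roots_charpoly (isHermitian_conjTranspose_mul_mul U hM),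
    vN_eq_sum_roots_charpoly hM, charpoly_mul_comm, ← Matrix.mul_assoc, mul_eq_one_comm.mp hU,
    Matrix.one_mul]

theorem vN_cfc {M : Matrix ι ι ℂ} (hM : M.IsHermitian) (f : ℝ → ℝ) :
    vN (cfc f M) = ∑ i, Real.negMulLog (f (hM.eigenvalues i)) := by
  rw [vN_eq_sum_roots_charpoly (cfc_predicate f M), hM.charpoly_cfc_eq,
    roots_prod _ _ (Finset.prod_ne_zero_iff.mpr fun i _ => X_sub_C_ne_zero _)]
  simp

theorem vN_real_smul {M : Matrix ι ι ℂ} (hM : M.IsHermitian) (r : ℝ) :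
    vN ((r : ℂ) • M) = r * vN M + Real.negMulLog r * M.trace.re := by
  rw [Complex.coe_smul, ← cfc_const_mul_id r M (show IsSelfAdjoint M from hM), vN_cfc hM, vN,
    dif_pos hM, hM.trace_eq_sum_eigenvalues, re_sum, Finset.mul_sum, Finset.mul_sum,
    ← Finset.sum_add_distrib]
  refine Finset.sum_congr rfl fun i _ => ?_
  simp only [Real.negMulLog_mul, coe_algebraMap, ofReal_re]
  ring

/-- At `tr B = 0` the junk value `0⁻¹ = 0` is harmless, since then `B = 0`. -/
theorem vN_eq_negMulLog_trace_add {B : Matrix ι ι ℂ} (hB : B.PosSemidef) :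
    vN B = Real.negMulLog B.trace.re +
      B.trace.re * vN (((B.trace.re : ℂ))⁻¹ • B) := by
  set t := B.trace.re with ht
  by_cases ht0 : t = 0
  · have hB0 : B = 0 := hB.trace_eq_zero_iff.mp <|
      Complex.ext ht0 (Complex.nonneg_iff.mp hB.trace_nonneg).2.symm
    simp [ht0, hB0, vN_zero]
  · have htC : (t : ℂ) ≠ 0 := ofReal_ne_zero.mpr ht0
    have hB' : ((t : ℂ))⁻¹ • B = ((t⁻¹ : ℝ) : ℂ) • B := by rw [ofReal_inv]
    have hH : (((t : ℂ))⁻¹ • B).IsHermitian := hB' ▸ hB.1.smul (by simp [IsSelfAdjoint])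
    have htr : (((t : ℂ))⁻¹ • B).trace.re = 1 := by
      rw [hB', trace_smul, smul_eq_mul, re_ofReal_mul, ← ht, inv_mul_cancel₀ ht0]
    conv_lhs => rw [← smul_inv_smul₀ htC B]
    rw [vN_real_smul hH, htr, mul_one, add_comm]

theorem vN_blockDiagonal {B : κ → Matrix ι ι ℂ} (hB : ∀ k, (B k).IsHermitian) :
    vN (blockDiagonal B) = ∑ k, vN (B k) := by
  rw [vN_eq_sum_roots_charpoly (isHermitian_blockDiagonal_iff.mpr hB), charpoly_blockDiagonal,
    roots_prod _ _ (Finset.prod_ne_zero_iff.mpr fun k _ => (charpoly_monic _).ne_zero),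
    Multiset.map_bind, Multiset.sum_bind]
  exact Finset.sum_congr rfl fun k _ => (vN_eq_sum_roots_charpoly (hB k)).symm

theorem vN_kronecker_single_self {M : Matrix ι ι ℂ} (hM : M.IsHermitian) (k : κ) :
    vN (M ⊗ₖ single k k 1) = vN M := by
  have hH : ∀ l, (Pi.single k M : κ → Matrix ι ι ℂ) l |>.IsHermitian := fun l => by
    by_cases h : l = k
    · subst h; simp [hM]
    · simp [h]
  rw [kronecker_single_self, vN_blockDiagonal hH,
    Finset.sum_eq_single k (fun l _ hl => by simp [hl, vN_zero]) (by simp), Pi.single_eq_same]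

/-- The joint entropy theorem for `∑ₖ pₖ ρₖ ⊗ |k⟩⟨k|`, with `pₖ ρₖ = Bₖ`. -/
theorem vN_sum_kronecker_single_self {B : κ → Matrix ι ι ℂ} (hB : ∀ k, (B k).PosSemidef) :
    vN (∑ k, B k ⊗ₖ single k k 1) = ∑ k, Real.negMulLog (B k).trace.re +
      ∑ k, (B k).trace.re * vN (((B k).trace.re : ℂ)⁻¹ • B k) := by
  rw [sum_kronecker_single_self, vN_blockDiagonal fun k => (hB k).1, ← Finset.sum_add_distrib]
  exact Finset.sum_congr rfl fun k _ => vN_eq_negMulLog_trace_add (hB k)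

end Entropy

theorem povm_relEnt_coherence_formula_general (d n : ℕ) [NeZero n]
    (E A : Fin n → Matrix (Fin d) (Fin d) ℂ)
    (hE : ∀ i, E i = (A i)ᴴ * A i)
    (V : Matrix (Fin d × Fin n) (Fin d × Fin n) ℂ)
    (hV : Vᴴ * V = 1)
    (hact : ∀ X : Matrix (Fin d) (Fin d) ℂ,
      V * (X ⊗ₖ Matrix.single (0 : Fin n) (0 : Fin n) (1 : ℂ)) * Vᴴ =
        ∑ i, ∑ j, (A i * X * (A j)ᴴ) ⊗ₖ Matrix.single i j (1 : ℂ))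
    (P : Fin n → Matrix (Fin d × Fin n) (Fin d × Fin n) ℂ)
    (hP : ∀ i, P i = Vᴴ * ((1 : Matrix (Fin d) (Fin d) ℂ) ⊗ₖ
      Matrix.single i i (1 : ℂ)) * V)
    (ρ : Matrix (Fin d) (Fin d) ℂ) (hρ : ρ.PosSemidef)
    (p : Fin n → ℝ) (hp : ∀ i, p i = (Matrix.trace (E i * ρ)).re)
    (ρi : Fin n → Matrix (Fin d) (Fin d) ℂ)
    (hρi : ∀ i, ρi i = ((p i : ℂ))⁻¹ • (A i * ρ * (A i)ᴴ)) :
    vN (∑ k, P k * (ρ ⊗ₖ Matrix.single (0 : Fin n) (0 : Fin n) (1 : ℂ)) * P k)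
        - vN (ρ ⊗ₖ Matrix.single (0 : Fin n) (0 : Fin n) (1 : ℂ)) =
      vN (∑ i, (A i * ρ * (A i)ᴴ) ⊗ₖ Matrix.single i i (1 : ℂ)) - vN ρ ∧
    vN (∑ i, (A i * ρ * (A i)ᴴ) ⊗ₖ Matrix.single i i (1 : ℂ)) - vN ρ =
      (∑ i, Real.negMulLog (p i)) + (∑ i, p i * vN (ρi i)) - vN ρ := by
  have hB : ∀ i, (A i * ρ * (A i)ᴴ).PosSemidef := fun i => hρ.mul_mul_conjTranspose_same (A i)
  have hdephase :
      ∑ k, P k * (ρ ⊗ₖ single (0 : Fin n) 0 1) * P k =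
        Vᴴ * (∑ i, (A i * ρ * (A i)ᴴ) ⊗ₖ single i i 1) * V := by
    calc ∑ k, P k * (ρ ⊗ₖ single (0 : Fin n) 0 1) * P k
        _ = ∑ k, Vᴴ * ((1 ⊗ₖ single k k 1) * (V * (ρ ⊗ₖ single (0 : Fin n) 0 1) * Vᴴ) *
              (1 ⊗ₖ single k k 1)) * V := by
          simp only [hP, Matrix.mul_assoc]
        _ = Vᴴ * (∑ i, (A i * ρ * (A i)ᴴ) ⊗ₖ single i i 1) * V := by
          rw [← Finset.sum_mul, ← Finset.mul_sum, hact, sum_one_kronecker_single_mul_mul]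
  have hp' : ∀ i, p i = (A i * ρ * (A i)ᴴ).trace.re := fun i => by
    rw [hp, hE, Matrix.mul_assoc, trace_mul_comm]
  have hBH : (∑ i, (A i * ρ * (A i)ᴴ) ⊗ₖ single i i 1).IsHermitian := by
    rw [sum_kronecker_single_self]
    exact isHermitian_blockDiagonal_iff.mpr fun i => (hB i).1
  constructor
  · rw [hdephase, vN_kronecker_single_self hρ.1, vN_conjTranspose_mul_mul hBH hV]
  · rw [vN_sum_kronecker_single_self hB]
    simp_rw [hρi, hp']

/-- For a POVM {E_i} with measurement operators A_i, the relative
entropy of POVM-based coherence — defined as S(Δ[ρ⊗|1⟩⟨1|]) − S(ρ⊗|1⟩⟨1|) via the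
canonical Naimark extension P_i = V†(1⊗|i⟩⟨i|)V — satisfies
C_rel(ρ,E) = S(Σ_i A_i ρ A_i† ⊗ |i⟩⟨i|) − S(ρ)
           = H({p_i}) + Σ_i p_i S(ρ_i) − S(ρ). -/
theorem povm_relEnt_coherence_formula (d n : ℕ) [NeZero n]
    (E A : Fin n → Matrix (Fin d) (Fin d) ℂ)
    (hE : ∀ i, E i = (A i)ᴴ * A i)
    (hsum : ∑ i, E i = 1)
    (V : Matrix (Fin d × Fin n) (Fin d × Fin n) ℂ)
    (hV : Vᴴ * V = 1)
    (hact : ∀ X : Matrix (Fin d) (Fin d) ℂ,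
      V * (X ⊗ₖ Matrix.single (0 : Fin n) (0 : Fin n) (1 : ℂ)) * Vᴴ =
        ∑ i, ∑ j, (A i * X * (A j)ᴴ) ⊗ₖ Matrix.single i j (1 : ℂ))
    (P : Fin n → Matrix (Fin d × Fin n) (Fin d × Fin n) ℂ)
    (hP : ∀ i, P i = Vᴴ * ((1 : Matrix (Fin d) (Fin d) ℂ) ⊗ₖ
      Matrix.single i i (1 : ℂ)) * V)
    (ρ : Matrix (Fin d) (Fin d) ℂ) (hρ : ρ.PosSemidef) (htr : ρ.trace = 1)
    (p : Fin n → ℝ) (hp : ∀ i, p i = (Matrix.trace (E i * ρ)).re)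
    (ρi : Fin n → Matrix (Fin d) (Fin d) ℂ)
    (hρi : ∀ i, ρi i = ((p i : ℂ))⁻¹ • (A i * ρ * (A i)ᴴ)) :
    vN (∑ k, P k * (ρ ⊗ₖ Matrix.single (0 : Fin n) (0 : Fin n) (1 : ℂ)) * P k)
        - vN (ρ ⊗ₖ Matrix.single (0 : Fin n) (0 : Fin n) (1 : ℂ)) =
      vN (∑ i, (A i * ρ * (A i)ᴴ) ⊗ₖ Matrix.single i i (1 : ℂ)) - vN ρ ∧
    vN (∑ i, (A i * ρ * (A i)ᴴ) ⊗ₖ Matrix.single i i (1 : ℂ)) - vN ρ =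
      (∑ i, Real.negMulLog (p i)) + (∑ i, p i * vN (ρi i)) - vN ρ :=
  povm_relEnt_coherence_formula_general d n E A hE V hV hact P hP ρ hρ p hp ρi hρi
end

section
/- A quantum state ρ on H is POVM-incoherent with respect to a POVM {E_i}_{i=1}^n (i.e., its canonical Naimark embedding ρ ⊗ |1⟩⟨1| is block-incoherent with respect to the canonical Naimark extension) if and only if E_i ρ E_j = 0 for all i ≠ j. -/
open Matrix Kronecker Complex ComplexOrder

/-!
With `σ = ρ ⊗ |0⟩⟨0|` and `Q k = 1 ⊗ |k⟩⟨k|`, conjugating by the unitary `V` turns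
`P k σ P k` into `Vᴴ (Q k (V σ Vᴴ) Q k) V`, where `V σ Vᴴ = ∑ i j, A i ρ (A j)ᴴ ⊗ |i⟩⟨j|`.
Hence `σ` is block-incoherent iff the off-diagonal blocks `A i ρ (A j)ᴴ` vanish. These vanish
iff `E i ρ E j = (A i)ᴴ (A i ρ (A j)ᴴ) A j` does, because `Mᴴ M X = 0` forces `M X = 0`:
`(M X)ᴴ (M X) = Xᴴ (Mᴴ M X)`.
-/

namespace Matrix

variable {l m n p R : Type*}

lemma conjTranspose_mul_self_mul_mul_conjTranspose_mul_self_eq_zero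
    [Fintype l] [Fintype m] [Fintype n] [Fintype p]
    [PartialOrder R] [CommRing R] [StarRing R] [StarOrderedRing R] [NoZeroDivisors R]
    (A : Matrix l m R) (X : Matrix m n R) (B : Matrix p n R) :
    Aᴴ * A * X * (Bᴴ * B) = 0 ↔ A * X * Bᴴ = 0 := by
  rw [Matrix.mul_assoc (Aᴴ * A), conjTranspose_mul_self_mul_eq_zero, ← Matrix.mul_assoc,
    mul_conjTranspose_mul_self_eq_zero]

lemma conjTranspose_mul_mul_inj [Fintype n] [DecidableEq n] [CommRing R] [StarRing R]
    {V : Matrix n n R} (hV : Vᴴ * V = 1) {X Y : Matrix n n R} :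
    Vᴴ * X * V = Vᴴ * Y * V ↔ X = Y := by
  have hV' : V * Vᴴ = 1 := mul_eq_one_comm.mp hV
  refine ⟨fun h => ?_, fun h => h ▸ rfl⟩
  simpa [← Matrix.mul_assoc, Matrix.mul_assoc _ V, hV', hV] using congrArg (V * · * Vᴴ) h

section BlockDephasing

variable [DecidableEq n] [Semiring R]

lemma sum_sum_kronecker_single_apply [Fintype n] (Y : n → n → Matrix m m R) (x y : m × n) :
    (∑ i, ∑ j, Y i j ⊗ₖ single i j (1 : R)) x y = Y x.2 y.2 x.1 y.1 := by
  simp [Matrix.sum_apply, single_apply, ite_and]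

variable [DecidableEq m]

lemma one_kronecker_single_eq_diagonal (k : n) :
    (1 : Matrix m m R) ⊗ₖ single k k (1 : R) = diagonal fun x => if x.2 = k then 1 else 0 := by
  rw [← diagonal_one, ← diagonal_single, diagonal_kronecker_diagonal]
  congr 1
  ext x
  simp [Pi.single_apply]

variable [Fintype m] [Fintype n]

lemma sum_one_kronecker_single_mul_mul_apply (M : Matrix (m × n) (m × n) R) (x y : m × n) :
    (∑ k, ((1 : Matrix m m R) ⊗ₖ single k k (1 : R)) * M * (1 ⊗ₖ single k k 1) :
      Matrix (m × n) (m × n) R) x y = if x.2 = y.2 then M x y else 0 := by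
  simp [one_kronecker_single_eq_diagonal, Matrix.sum_apply, diagonal_mul, mul_diagonal]

lemma sum_one_kronecker_single_mul_mul_eq_self_iff (M : Matrix (m × n) (m × n) R) :
    ∑ k, ((1 : Matrix m m R) ⊗ₖ single k k (1 : R)) * M * (1 ⊗ₖ single k k 1) = M ↔
      ∀ i j, i ≠ j → ∀ a b, M (a, i) (b, j) = 0 := by
  simp only [← Matrix.ext_iff, sum_one_kronecker_single_mul_mul_apply, Prod.forall,
    ite_eq_left_iff, eq_comm (a := (0 : R))]
  exact ⟨fun h i j hij a b => h a i b j hij, fun h a i b j hij => h i j hij a b⟩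

end BlockDephasing

end Matrix

theorem povm_incoherent_iff_general (d n : ℕ) [NeZero n]
    (E A : Fin n → Matrix (Fin d) (Fin d) ℂ)
    (hE : ∀ i, E i = (A i)ᴴ * A i)
    (V : Matrix (Fin d × Fin n) (Fin d × Fin n) ℂ)
    (hV : Vᴴ * V = 1)
    (hact : ∀ X : Matrix (Fin d) (Fin d) ℂ,
      V * (X ⊗ₖ Matrix.single (0 : Fin n) (0 : Fin n) (1 : ℂ)) * Vᴴ =
        ∑ i, ∑ j, (A i * X * (A j)ᴴ) ⊗ₖ Matrix.single i j (1 : ℂ))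
    (P : Fin n → Matrix (Fin d × Fin n) (Fin d × Fin n) ℂ)
    (hP : ∀ i, P i = Vᴴ * ((1 : Matrix (Fin d) (Fin d) ℂ) ⊗ₖ
      Matrix.single i i (1 : ℂ)) * V)
    (ρ : Matrix (Fin d) (Fin d) ℂ) :
    (∑ k, P k * (ρ ⊗ₖ Matrix.single (0 : Fin n) (0 : Fin n) (1 : ℂ)) * P k =
      ρ ⊗ₖ Matrix.single (0 : Fin n) (0 : Fin n) (1 : ℂ)) ↔
    (∀ i j, i ≠ j → E i * ρ * E j = 0) := by
  set σ := ρ ⊗ₖ single (0 : Fin n) (0 : Fin n) (1 : ℂ)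
  have hPσP : ∀ k, P k * σ * P k =
      Vᴴ * ((1 ⊗ₖ single k k 1) * (V * σ * Vᴴ) * (1 ⊗ₖ single k k 1)) * V := by
    intro k
    simp only [hP, Matrix.mul_assoc]
  have hσ : σ = Vᴴ * (V * σ * Vᴴ) * V := by
    simp only [← Matrix.mul_assoc, hV, Matrix.one_mul, Matrix.mul_assoc σ, Matrix.mul_one]
  rw [Finset.sum_congr rfl fun k _ => hPσP k, ← Finset.sum_mul, ← Finset.mul_sum]
  nth_rw 2 [hσ]
  rw [conjTranspose_mul_mul_inj hV, sum_one_kronecker_single_mul_mul_eq_self_iff, hact]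
  simp only [sum_sum_kronecker_single_apply, hE,
    conjTranspose_mul_self_mul_mul_conjTranspose_mul_self_eq_zero]
  simp only [← Matrix.ext_iff, Matrix.zero_apply]

/-- A state ρ is POVM-incoherent with respect to {E_i} — i.e., its
canonical Naimark embedding ρ ⊗ |1⟩⟨1| is block-incoherent with respect to the
canonical Naimark extension P_i = V†(1⊗|i⟩⟨i|)V — iff E_i ρ E_j = 0 for all i ≠ j. -/
theorem povm_incoherent_iff (d n : ℕ) [NeZero n]
    (E A : Fin n → Matrix (Fin d) (Fin d) ℂ)
    (hE : ∀ i, E i = (A i)ᴴ * A i)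
    (hsum : ∑ i, E i = 1)
    (V : Matrix (Fin d × Fin n) (Fin d × Fin n) ℂ)
    (hV : Vᴴ * V = 1)
    (hact : ∀ X : Matrix (Fin d) (Fin d) ℂ,
      V * (X ⊗ₖ Matrix.single (0 : Fin n) (0 : Fin n) (1 : ℂ)) * Vᴴ =
        ∑ i, ∑ j, (A i * X * (A j)ᴴ) ⊗ₖ Matrix.single i j (1 : ℂ))
    (P : Fin n → Matrix (Fin d × Fin n) (Fin d × Fin n) ℂ)
    (hP : ∀ i, P i = Vᴴ * ((1 : Matrix (Fin d) (Fin d) ℂ) ⊗ₖ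
      Matrix.single i i (1 : ℂ)) * V)
    (ρ : Matrix (Fin d) (Fin d) ℂ) (hρ : ρ.PosSemidef) (htr : ρ.trace = 1) :
    (∑ k, P k * (ρ ⊗ₖ Matrix.single (0 : Fin n) (0 : Fin n) (1 : ℂ)) * P k =
      ρ ⊗ₖ Matrix.single (0 : Fin n) (0 : Fin n) (1 : ℂ)) ↔
    (∀ i j, i ≠ j → E i * ρ * E j = 0) :=
  povm_incoherent_iff_general d n E A hE V hV hact P hP ρ
end

section
/- For positive semidefinite operators E_i = A_i†A_i and E_j = A_j†A_j and a positive semidefinite ρ, the conditions A_i ρ A_j† = 0 and E_i ρ E_j = 0 are equivalent. -/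
open Matrix Kronecker Complex ComplexOrder

/-- For E_i = A_i†A_i, E_j = A_j†A_j and ρ positive semidefinite,
A_i ρ A_j† = 0 is equivalent to E_i ρ E_j = 0. -/
theorem measurementOp_eq_effect_condition (d : ℕ)
    (Ai Aj ρ : Matrix (Fin d) (Fin d) ℂ) (hρ : ρ.PosSemidef) :
    Ai * ρ * Ajᴴ = 0 ↔ (Aiᴴ * Ai) * ρ * (Ajᴴ * Aj) = 0 := by
  constructor
  · intro h
    have : Aiᴴ * (Ai * ρ * Ajᴴ) * Aj = 0 := by rw [h]; simp
    simpa [Matrix.mul_assoc] using this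
  · intro h
    set N := Ai * ρ * Ajᴴ with hN
    have h' : Aiᴴ * (Ai * (ρ * (Ajᴴ * Aj))) = 0 := by
      simpa [Matrix.mul_assoc] using h
    have key : Nᴴ * (N * Nᴴ) = 0 := by
      have : Nᴴ * (N * Nᴴ) =
          Aj * (ρ * (Aiᴴ * (Ai * (ρ * (Ajᴴ * Aj))) * (ρ * Aiᴴ))) := by
        simp [hN, Matrix.conjTranspose_mul, hρ.1.eq, Matrix.mul_assoc]
      rw [this, h']
      simp
    have h2 : N * Nᴴ = 0 := by
      rw [← Matrix.conjTranspose_mul_self_eq_zero (A := N * Nᴴ)]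
      calc (N * Nᴴ)ᴴ * (N * Nᴴ) = N * (Nᴴ * (N * Nᴴ)) := by
            simp [Matrix.conjTranspose_mul, Matrix.mul_assoc]
        _ = 0 := by rw [key]; simp
    exact Matrix.self_mul_conjTranspose_eq_zero.mp h2
end

section
/- For any n-outcome POVM E = {E_i}, the relative entropy of POVM-based coherence satisfies 0 ≤ C_rel(ρ, E) ≤ log n for every density matrix ρ, and for pure states ρ = |ψ⟩⟨ψ| one has C_rel(|ψ⟩⟨ψ|, E) = H({p_i(|ψ⟩)}) where p_i = ⟨ψ|E_i|ψ⟩. -/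
/-!
Write `ρ = R Rᴴ` with `Rᴴ R = diag λ`, `λ` the spectrum of `ρ`, and let `Zᵢ` diagonalize the
`i`-th post-measurement state `ρᵢ`, with spectrum `γᵢ`. The matrices `Bᵢ = Zᵢᴴ Aᵢ R` satisfy
`Bᵢ Bᵢᴴ = diag (pᵢ γᵢ)` and `∑ᵢ Bᵢᴴ Bᵢ = diag λ`, and by the chain rule
`H(p) + ∑ᵢ pᵢ S(ρᵢ)` is the Shannon entropy of the numbers `pᵢ γᵢⱼ`.

If `Cᴴ C = diag β`, the diagonal of `C Cᴴ` is the image of `β` under a doubly substochastic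
matrix, so by concavity of `-x log x` its entropy is at least that of `β`. Applied to the matrix
stacking the `Bᵢ` this gives `S(ρ) ≤ H(p) + ∑ᵢ pᵢ S(ρᵢ)`. Applied to each `Bᵢᴴ` it bounds
`H(p) + ∑ᵢ pᵢ S(ρᵢ)` by the entropy of the numbers `(Bᵢᴴ Bᵢ)ₖₖ`, which sum over `i` to `λₖ`,
hence by `S(ρ) + log n`. For a pure state every `ρᵢ` is a rank-one projection, of entropy zero.
-/

open Matrix Kronecker Complex ComplexOrder

namespace Real

variable {ι κ : Type*} [Fintype ι] [Fintype κ]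

theorem sum_mul_negMulLog_le_negMulLog_sum {w x : ι → ℝ} (hw : ∀ i, 0 ≤ w i)
    (hw1 : ∑ i, w i ≤ 1) (hx : ∀ i, 0 ≤ x i) :
    ∑ i, w i * negMulLog (x i) ≤ negMulLog (∑ i, w i * x i) := by
  -- pad the weights to a probability vector with an extra point at `0`, where `negMulLog` vanishes
  have h := concaveOn_negMulLog.le_map_sum (t := (Finset.univ : Finset (Option ι)))
    (w := fun o => o.elim (1 - ∑ i, w i) w) (p := fun o => o.elim 0 x)
    (by rintro (_ | i) _ <;> simp [hw, hw1]) (by simp [Fintype.sum_option])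
    (by rintro (_ | i) _ <;> simp [hx])
  simpa [Fintype.sum_option] using h

theorem sum_negMulLog_le_sum_negMulLog_sum_mul (w : κ → ι → ℝ) {x : ι → ℝ}
    (hw : ∀ k i, 0 ≤ w k i) (hx : ∀ i, 0 ≤ x i) (hrow : ∀ k, ∑ i, w k i ≤ 1)
    (hcol : ∀ i, x i ≠ 0 → ∑ k, w k i = 1) :
    ∑ i, negMulLog (x i) ≤ ∑ k, negMulLog (∑ i, w k i * x i) :=
  calc ∑ i, negMulLog (x i) = ∑ i, (∑ k, w k i) * negMulLog (x i) := by
        refine Finset.sum_congr rfl fun i _ => ?_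
        by_cases h : x i = 0
        · simp [h]
        · rw [hcol i h, one_mul]
    _ = ∑ k, ∑ i, w k i * negMulLog (x i) := by
        simp only [Finset.sum_mul]; exact Finset.sum_comm
    _ ≤ ∑ k, negMulLog (∑ i, w k i * x i) :=
        Finset.sum_le_sum fun k _ => sum_mul_negMulLog_le_negMulLog_sum (hw k) (hrow k) hx

theorem sum_negMulLog_le_negMulLog_sum_add_mul_log_card {r : ι → ℝ} (hr : ∀ i, 0 ≤ r i) :
    ∑ i, negMulLog (r i) ≤ negMulLog (∑ i, r i) + (∑ i, r i) * log (Fintype.card ι) := by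
  rcases isEmpty_or_nonempty ι with hι | hι
  · simp
  set N : ℝ := (Fintype.card ι : ℝ)
  have hN : 0 < N := by simp [N, Fintype.card_pos]
  have h := concaveOn_negMulLog.le_map_sum (t := Finset.univ) (w := fun _ => N⁻¹) (p := r)
    (fun _ _ => by positivity) (by simp [N, hN.ne']) (fun i _ => hr i)
  simp only [smul_eq_mul, ← Finset.mul_sum] at h
  rw [mul_comm N⁻¹, negMulLog_mul, negMulLog, log_inv] at h
  have := mul_le_mul_of_nonneg_left h hN.le
  field_simp at this
  linarith

theorem sum_negMulLog_mul_eq {p : ℝ} {γ : ι → ℝ} (h : p ≠ 0 → ∑ i, γ i = 1) :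
    ∑ i, negMulLog (p * γ i) = negMulLog p + p * ∑ i, negMulLog (γ i) := by
  simp only [negMulLog_mul, Finset.sum_add_distrib, ← Finset.sum_mul, ← Finset.mul_sum]
  by_cases hp : p = 0
  · simp [hp]
  · rw [h hp, one_mul]

end Real

namespace Matrix

variable {m n : Type*}

theorem conjTranspose_mul_self_apply_self [Fintype m] (C : Matrix m n ℂ) (j : n) :
    (Cᴴ * C) j j = ((∑ i, normSq (C i j) : ℝ) : ℂ) := by
  simp [mul_apply, Complex.normSq_eq_conj_mul_self]

theorem mul_conjTranspose_self_apply_self [Fintype n] (C : Matrix m n ℂ) (i : m) :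
    (C * Cᴴ) i i = ((∑ j, normSq (C i j) : ℝ) : ℂ) := by
  simpa using conjTranspose_mul_self_apply_self Cᴴ i

theorem IsHermitian.re_apply_self_le_one_of_mul_self [Fintype m] {P : Matrix m m ℂ}
    (hP : P.IsHermitian) (hPP : P * P = P) (i : m) : (P i i).re ≤ 1 := by
  have hdiag : P i i = ((∑ k, normSq (P i k) : ℝ) : ℂ) :=
    calc P i i = (P * Pᴴ) i i := by rw [hP.eq, hPP]
      _ = _ := mul_conjTranspose_self_apply_self P i
  have hre : (P i i).re = ∑ k, normSq (P i k) := by simp [hdiag]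
  have hsq : (P i i).re * (P i i).re ≤ (P i i).re :=
    calc (P i i).re * (P i i).re = normSq (P i i) := by rw [hdiag, ofReal_re, normSq_ofReal]
      _ ≤ ∑ k, normSq (P i k) :=
          Finset.single_le_sum (fun k _ => normSq_nonneg _) (Finset.mem_univ i)
      _ = (P i i).re := hre.symm
  have hnonneg : 0 ≤ (P i i).re := hre ▸ Finset.sum_nonneg fun k _ => normSq_nonneg _
  nlinarith

theorem sum_negMulLog_le_sum_negMulLog_mul_conjTranspose_self [Fintype m] [Fintype n]
    [DecidableEq n] (C : Matrix m n ℂ) {β : n → ℝ} (h : Cᴴ * C = diagonal fun j => (β j : ℂ)) :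
    ∑ j, Real.negMulLog (β j) ≤ ∑ i, Real.negMulLog ((C * Cᴴ) i i).re := by
  have hβ : ∀ j, β j = ∑ i, normSq (C i j) := fun j => by
    have hj := congrFun (congrFun h j) j
    rw [conjTranspose_mul_self_apply_self, diagonal_apply_eq] at hj
    exact_mod_cast hj.symm
  have hβ0 : ∀ j, 0 ≤ β j := fun j => hβ j ▸ Finset.sum_nonneg fun i _ => normSq_nonneg _
  have hC0 : ∀ i j, β j = 0 → C i j = 0 := fun i j hj => normSq_eq_zero.mp <|
    (Finset.sum_eq_zero_iff_of_nonneg fun i _ => normSq_nonneg _).mp ((hβ j).symm.trans hj) i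
      (Finset.mem_univ i)
  -- `P` is the orthogonal projection onto the range of `C`, so its diagonal entries are at most `1`
  set P := C * diagonal (fun j => ((β j : ℂ))⁻¹) * Cᴴ
  have hP : P.IsHermitian :=
    isHermitian_mul_mul_conjTranspose C (isHermitian_diagonal_of_self_adjoint _ <| by
      ext j; simp)
  have hPP : P * P = P :=
    calc P * P = C * (diagonal (fun j => ((β j : ℂ))⁻¹) * (Cᴴ * C) *
          diagonal (fun j => ((β j : ℂ))⁻¹)) * Cᴴ := by simp only [P, Matrix.mul_assoc]
      _ = P := by
        rw [h, diagonal_mul_diagonal, diagonal_mul_diagonal]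
        congr 3
        ext j
        simpa using mul_inv_mul_cancel ((β j : ℂ))⁻¹
  have hPdiag : ∀ i, (P i i).re = ∑ j, normSq (C i j) / β j := fun i => by
    have hPi : P i i = ((∑ j, normSq (C i j) / β j : ℝ) : ℂ) := by
      simp only [P]
      rw [mul_apply]
      simp only [mul_diagonal, conjTranspose_apply]
      push_cast
      refine Finset.sum_congr rfl fun j _ => ?_
      rw [mul_right_comm, star_def, mul_conj, div_eq_mul_inv]
    rw [hPi, ofReal_re]
  refine (Real.sum_negMulLog_le_sum_negMulLog_sum_mul (fun i j => normSq (C i j) / β j)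
    (fun i j => div_nonneg (normSq_nonneg _) (hβ0 j)) hβ0
    (fun i => hPdiag i ▸ hP.re_apply_self_le_one_of_mul_self hPP i)
    (fun j hj => by rw [← Finset.sum_div, ← hβ j, div_self hj])).trans_eq ?_
  refine Finset.sum_congr rfl fun i _ => congrArg _ ?_
  rw [mul_conjTranspose_self_apply_self, ofReal_re]
  refine Finset.sum_congr rfl fun j _ => ?_
  by_cases hj : β j = 0
  · simp [hj, hC0 i j hj]
  · exact div_mul_cancel₀ _ hj

section Kraus

variable {ι : Type*} [Fintype ι] [Fintype m] [Fintype n] [DecidableEq m] [DecidableEq n]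
  (B : ι → Matrix m n ℂ) {μ : ι → m → ℝ} {lam : n → ℝ}
  (hB : ∀ i, B i * (B i)ᴴ = diagonal fun j => (μ i j : ℂ))
  (hsum : ∑ i, (B i)ᴴ * B i = diagonal fun k => (lam k : ℂ))
include hB hsum

theorem sum_negMulLog_le_sum_sum_negMulLog_of_kraus :
    ∑ k, Real.negMulLog (lam k) ≤ ∑ i, ∑ j, Real.negMulLog (μ i j) := by
  set C : Matrix (ι × m) n ℂ := of fun p k => B p.1 p.2 k
  have hC : Cᴴ * C = diagonal fun k => (lam k : ℂ) := by
    rw [← hsum]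
    ext k k'
    simp [C, mul_apply, Fintype.sum_prod_type, Matrix.sum_apply]
  refine (sum_negMulLog_le_sum_negMulLog_mul_conjTranspose_self C hC).trans_eq ?_
  rw [Fintype.sum_prod_type]
  refine Finset.sum_congr rfl fun i _ => Finset.sum_congr rfl fun j _ => ?_
  have hij : (C * Cᴴ) (i, j) (i, j) = (B i * (B i)ᴴ) j j := by simp [C, mul_apply]
  rw [hij, hB i, diagonal_apply_eq, ofReal_re]

theorem sum_sum_negMulLog_le_sum_negMulLog_add_of_kraus :
    ∑ i, ∑ j, Real.negMulLog (μ i j) ≤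
      ∑ k, Real.negMulLog (lam k) + (∑ k, lam k) * Real.log (Fintype.card ι) := by
  set r : ι → n → ℝ := fun i k => (((B i)ᴴ * B i) k k).re
  have hr : ∀ i k, r i k = ∑ j, normSq (B i j k) := fun i k => by
    simp [r, conjTranspose_mul_self_apply_self]
  have hr_sum : ∀ k, ∑ i, r i k = lam k := fun k => by
    simpa [r, Matrix.sum_apply, re_sum] using congrArg (fun M => (M k k).re) hsum
  calc ∑ i, ∑ j, Real.negMulLog (μ i j) ≤ ∑ i, ∑ k, Real.negMulLog (r i k) :=
        Finset.sum_le_sum fun i _ => by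
          simpa only [conjTranspose_conjTranspose] using
            sum_negMulLog_le_sum_negMulLog_mul_conjTranspose_self (B i)ᴴ
              (by rw [conjTranspose_conjTranspose, hB i])
    _ = ∑ k, ∑ i, Real.negMulLog (r i k) := Finset.sum_comm
    _ ≤ ∑ k, (Real.negMulLog (lam k) + lam k * Real.log (Fintype.card ι)) :=
        Finset.sum_le_sum fun k _ => hr_sum k ▸
          Real.sum_negMulLog_le_negMulLog_sum_add_mul_log_card fun i =>
            hr i k ▸ Finset.sum_nonneg fun j _ => normSq_nonneg _
    _ = _ := by rw [Finset.sum_add_distrib, Finset.sum_mul]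

end Kraus

section Spectral

variable [Fintype n]

theorem IsHermitian.conjTranspose_eigenvectorUnitary_mul_mul_eigenvectorUnitary [DecidableEq n]
    {A : Matrix n n ℂ} (hA : A.IsHermitian) :
    (hA.eigenvectorUnitary : Matrix n n ℂ)ᴴ * A * hA.eigenvectorUnitary =
      diagonal fun j => (hA.eigenvalues j : ℂ) := by
  have h := hA.conjStarAlgAut_star_eigenvectorUnitary
  rw [Unitary.conjStarAlgAut_star_apply] at h
  exact h

theorem PosSemidef.exists_eq_mul_conjTranspose_and_conjTranspose_mul_eq_diagonal
    [DecidableEq n] {ρ : Matrix n n ℂ} (hρ : ρ.PosSemidef) :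
    ∃ R : Matrix n n ℂ, ρ = R * Rᴴ ∧ Rᴴ * R = diagonal fun k => (hρ.1.eigenvalues k : ℂ) := by
  set U : Matrix n n ℂ := ↑hρ.1.eigenvectorUnitary
  set D : Matrix n n ℂ := diagonal fun k => (Real.sqrt (hρ.1.eigenvalues k) : ℂ)
  have hD : Dᴴ = D := by simp [D]
  have hDD : D * D = diagonal fun k => (hρ.1.eigenvalues k : ℂ) := by
    rw [diagonal_mul_diagonal]
    congr 1; ext k
    rw [← ofReal_mul, Real.mul_self_sqrt (hρ.eigenvalues_nonneg k)]
  refine ⟨U * D, ?_, ?_⟩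
  · rw [conjTranspose_mul, hD, Matrix.mul_assoc, ← Matrix.mul_assoc D, hDD]
    conv_lhs => rw [hρ.1.spectral_theorem]
    simp [U, Matrix.mul_assoc]
    rfl
  · rw [conjTranspose_mul, hD, Matrix.mul_assoc, ← Matrix.mul_assoc Uᴴ,
      show Uᴴ * U = 1 from Unitary.coe_star_mul_self _, Matrix.one_mul, hDD]

theorem PosSemidef.ofReal_re_trace {A : Matrix n n ℂ} (hA : A.PosSemidef) :
    ((A.trace.re : ℝ) : ℂ) = A.trace :=
  (eq_re_of_ofReal_le (r := 0) (by rw [ofReal_zero]; exact hA.trace_nonneg)).symm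

theorem PosSemidef.re_trace_smul_inv_re_trace_smul_self {A : Matrix n n ℂ} (hA : A.PosSemidef) :
    (A.trace.re : ℂ) • ((A.trace.re : ℂ)⁻¹ • A) = A := by
  by_cases h : A.trace.re = 0
  · have hA0 : A = 0 := hA.trace_eq_zero_iff.mp (by rw [← hA.ofReal_re_trace, h, ofReal_zero])
    simp [hA0]
  · rw [smul_smul, mul_inv_cancel₀ (ofReal_ne_zero.mpr h), one_smul]

theorem IsHermitian.sum_eigenvalues_eq_re_trace [DecidableEq n] {A : Matrix n n ℂ}
    (hA : A.IsHermitian) : ∑ i, hA.eigenvalues i = A.trace.re := by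
  simp [hA.trace_eq_sum_eigenvalues]

theorem PosSemidef.inv_re_trace_smul_self {A : Matrix n n ℂ} (hA : A.PosSemidef) :
    ((A.trace.re : ℂ)⁻¹ • A).PosSemidef := by
  have h0 : 0 ≤ A.trace.re := by simpa using (RCLike.nonneg_iff.mp hA.trace_nonneg).1
  rw [← ofReal_inv]
  exact hA.smul (zero_le_real.mpr (inv_nonneg.mpr h0))

theorem re_trace_inv_smul_self_eq_one {A : Matrix n n ℂ} (h : A.trace.re ≠ 0) :
    ((A.trace.re : ℂ)⁻¹ • A).trace.re = 1 := by
  rw [trace_smul, smul_eq_mul, ← ofReal_inv, re_ofReal_mul, inv_mul_cancel₀ h]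

end Spectral

end Matrix

theorem vN_of_isHermitian {n : Type*} [Fintype n] [DecidableEq n] {ρ : Matrix n n ℂ}
    (h : ρ.IsHermitian) : vN ρ = ∑ i, Real.negMulLog (h.eigenvalues i) :=
  dif_pos h

theorem vN_eq_zero_of_mul_self {n : Type*} [Fintype n] [DecidableEq n] {P : Matrix n n ℂ}
    (hP : P.IsHermitian) (hPP : P * P = P) : vN P = 0 := by
  set U : Matrix n n ℂ := ↑hP.eigenvectorUnitary
  have hdiag := hP.conjTranspose_eigenvectorUnitary_mul_mul_eigenvectorUnitary
  have hsq : (diagonal fun j => (hP.eigenvalues j : ℂ)) * (diagonal fun j => (hP.eigenvalues j : ℂ))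
      = diagonal fun j => (hP.eigenvalues j : ℂ) := by
    rw [← hdiag]
    calc Uᴴ * P * U * (Uᴴ * P * U) = Uᴴ * P * (U * Uᴴ) * P * U := by
          simp only [Matrix.mul_assoc]
      _ = Uᴴ * P * U := by
          rw [show U * Uᴴ = 1 from Unitary.coe_mul_star_self _, Matrix.mul_one,
            Matrix.mul_assoc Uᴴ, hPP]
  rw [diagonal_mul_diagonal] at hsq
  rw [vN_of_isHermitian hP]
  refine Finset.sum_eq_zero fun j _ => ?_
  have hj : hP.eigenvalues j * hP.eigenvalues j = hP.eigenvalues j := by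
    exact_mod_cast congrFun (diagonal_injective hsq) j
  rcases mul_eq_zero.mp (by linear_combination hj : hP.eigenvalues j * (hP.eigenvalues j - 1) = 0)
    with h | h
  · simp [h]
  · simp [sub_eq_zero.mp h]

theorem vN_inv_smul_vecMulVec_self_star {n : Type*} [Fintype n] [DecidableEq n] (φ : n → ℂ) :
    vN (((star φ ⬝ᵥ φ).re : ℂ)⁻¹ • vecMulVec φ (star φ)) = 0 := by
  set r : ℂ := ((star φ ⬝ᵥ φ).re : ℂ)
  have hr : star φ ⬝ᵥ φ = r :=
    eq_re_of_ofReal_le (r := 0) (by rw [ofReal_zero]; exact dotProduct_star_self_nonneg φ)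
  refine vN_eq_zero_of_mul_self ?_ ?_
  · rw [IsHermitian, conjTranspose_smul, (posSemidef_vecMulVec_self_star φ).1.eq, ← ofReal_inv,
      star_def, conj_ofReal]
  · rw [smul_mul_smul, vecMulVec_mul_vecMulVec, hr, vecMulVec_smul, smul_smul]
    congr 1
    by_cases h : r = 0
    · simp [h]
    · field_simp

theorem sum_sum_negMulLog_mul_eigenvalues_eq {ι n : Type*} [Fintype ι] [Fintype n]
    [DecidableEq n] {p : ι → ℝ} {M : ι → Matrix n n ℂ} (hM : ∀ i, (M i).IsHermitian)
    (hM1 : ∀ i, p i ≠ 0 → (M i).trace.re = 1) :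
    ∑ i, ∑ j, Real.negMulLog (p i * (hM i).eigenvalues j) =
      ∑ i, Real.negMulLog (p i) + ∑ i, p i * vN (M i) := by
  rw [← Finset.sum_add_distrib]
  refine Finset.sum_congr rfl fun i _ => ?_
  rw [vN_of_isHermitian (hM i)]
  exact Real.sum_negMulLog_mul_eq fun h => (hM i).sum_eigenvalues_eq_re_trace.trans (hM1 i h)

section Measurement

variable {ι n : Type*} [Fintype ι] [Fintype n] [DecidableEq n] {A : ι → Matrix n n ℂ}
  (hA : ∑ i, (A i)ᴴ * A i = 1) {ρ : Matrix n n ℂ} (hρ : ρ.PosSemidef) {p : ι → ℝ}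
  {M : ι → Matrix n n ℂ} (hM : ∀ i, (M i).IsHermitian)
  (hσ : ∀ i, A i * ρ * (A i)ᴴ = (p i : ℂ) • M i)
include hA hρ hM hσ

theorem exists_diagonalizing_kraus :
    ∃ B : ι → Matrix n n ℂ,
      (∀ i, B i * (B i)ᴴ = diagonal fun j => ((p i * (hM i).eigenvalues j : ℝ) : ℂ)) ∧
        ∑ i, (B i)ᴴ * B i = diagonal fun k => (hρ.1.eigenvalues k : ℂ) := by
  obtain ⟨R, hρR, hRR⟩ := hρ.exists_eq_mul_conjTranspose_and_conjTranspose_mul_eq_diagonal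
  set Z : ι → Matrix n n ℂ := fun i => ↑(hM i).eigenvectorUnitary
  -- the Kraus operators written in the eigenbases of `ρ` and of the post-measurement states
  refine ⟨fun i => (Z i)ᴴ * A i * R, fun i => ?_, ?_⟩
  · calc (Z i)ᴴ * A i * R * ((Z i)ᴴ * A i * R)ᴴ = (Z i)ᴴ * (A i * ρ * (A i)ᴴ) * Z i := by
          simp [hρR, conjTranspose_mul, Matrix.mul_assoc]
      _ = (p i : ℂ) • ((Z i)ᴴ * M i * Z i) := by
          rw [hσ i, Matrix.mul_smul, Matrix.smul_mul]
      _ = _ := by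
          rw [(hM i).conjTranspose_eigenvectorUnitary_mul_mul_eigenvectorUnitary, ← diagonal_smul]
          congr 1; ext j; simp
  · calc ∑ i, ((Z i)ᴴ * A i * R)ᴴ * ((Z i)ᴴ * A i * R) = ∑ i, Rᴴ * ((A i)ᴴ * A i) * R := by
          refine Finset.sum_congr rfl fun i _ => ?_
          simp only [conjTranspose_mul, conjTranspose_conjTranspose, Matrix.mul_assoc]
          rw [← Matrix.mul_assoc (Z i), show Z i * (Z i)ᴴ = 1 from Unitary.coe_mul_star_self _,
            Matrix.one_mul]
      _ = Rᴴ * R := by rw [← Finset.sum_mul, ← Finset.mul_sum, hA, Matrix.mul_one]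
      _ = _ := hRR

theorem vN_le_sum_negMulLog_add_sum_mul_vN (hM1 : ∀ i, p i ≠ 0 → (M i).trace.re = 1) :
    vN ρ ≤ ∑ i, Real.negMulLog (p i) + ∑ i, p i * vN (M i) := by
  obtain ⟨B, hB, hBsum⟩ := exists_diagonalizing_kraus hA hρ hM hσ
  rw [vN_of_isHermitian hρ.1, ← sum_sum_negMulLog_mul_eigenvalues_eq hM hM1]
  exact sum_negMulLog_le_sum_sum_negMulLog_of_kraus B hB hBsum

theorem sum_negMulLog_add_sum_mul_vN_le (hM1 : ∀ i, p i ≠ 0 → (M i).trace.re = 1) :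
    ∑ i, Real.negMulLog (p i) + ∑ i, p i * vN (M i) ≤
      vN ρ + ρ.trace.re * Real.log (Fintype.card ι) := by
  obtain ⟨B, hB, hBsum⟩ := exists_diagonalizing_kraus hA hρ hM hσ
  rw [vN_of_isHermitian hρ.1, ← hρ.1.sum_eigenvalues_eq_re_trace,
    ← sum_sum_negMulLog_mul_eigenvalues_eq hM hM1]
  exact sum_sum_negMulLog_le_sum_negMulLog_add_of_kraus B hB hBsum

end Measurement

/-- For any n-outcome POVM, the relative entropy of POVM-based
coherence C_rel(ρ,E) = H({p_i}) + Σ_i p_i S(ρ_i) − S(ρ) satisfies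
0 ≤ C_rel(ρ,E) ≤ log n, and for pure states ρ = |ψ⟩⟨ψ| it equals the Shannon
entropy H({⟨ψ|E_i|ψ⟩}). -/
theorem povm_coherence_bounds (d n : ℕ)
    (E A : Fin n → Matrix (Fin d) (Fin d) ℂ)
    (hE : ∀ i, E i = (A i)ᴴ * A i)
    (hsum : ∑ i, E i = 1)
    (C : Matrix (Fin d) (Fin d) ℂ → ℝ)
    (hC : ∀ ρ : Matrix (Fin d) (Fin d) ℂ,
      C ρ = (∑ i, Real.negMulLog ((Matrix.trace (E i * ρ)).re))
        + (∑ i, ((Matrix.trace (E i * ρ)).re) *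
            vN ((((Matrix.trace (E i * ρ)).re : ℂ))⁻¹ • (A i * ρ * (A i)ᴴ)))
        - vN ρ) :
    (∀ ρ : Matrix (Fin d) (Fin d) ℂ, ρ.PosSemidef → ρ.trace = 1 →
      0 ≤ C ρ ∧ C ρ ≤ Real.log n) ∧
    (∀ ψ : Fin d → ℂ, star ψ ⬝ᵥ ψ = 1 →
      C (Matrix.vecMulVec ψ (star ψ)) =
        ∑ i, Real.negMulLog ((Matrix.trace (E i * Matrix.vecMulVec ψ (star ψ))).re)) := by
  have htrace : ∀ i X, trace (E i * X) = trace (A i * X * (A i)ᴴ) := fun i X => by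
    rw [hE i, trace_mul_cycle (A i) X]
  refine ⟨fun ρ hρ htr => ?_, fun ψ hψ => ?_⟩
  · have hA : ∑ i, (A i)ᴴ * A i = 1 := by simpa [hE] using hsum
    have hσ : ∀ i, (A i * ρ * (A i)ᴴ).PosSemidef := fun i => hρ.mul_mul_conjTranspose_same (A i)
    have hσM := fun i => (hσ i).re_trace_smul_inv_re_trace_smul_self.symm
    have hM := fun i => (hσ i).inv_re_trace_smul_self.1
    have hM1 := fun i => re_trace_inv_smul_self_eq_one (A := A i * ρ * (A i)ᴴ)
    have hlower := vN_le_sum_negMulLog_add_sum_mul_vN hA hρ hM hσM hM1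
    have hupper := sum_negMulLog_add_sum_mul_vN_le hA hρ hM hσM hM1
    rw [htr, one_re, one_mul, Fintype.card_fin] at hupper
    simp only [hC, htrace]
    constructor <;> linarith
  · have hψA : ∀ i, A i * vecMulVec ψ (star ψ) * (A i)ᴴ = vecMulVec (A i *ᵥ ψ) (star (A i *ᵥ ψ)) :=
      fun i => by rw [mul_vecMulVec, vecMulVec_mul, star_mulVec]
    have hvN : vN (vecMulVec ψ (star ψ)) = 0 := by
      simpa [hψ] using vN_inv_smul_vecMulVec_self_star ψ
    simp only [hC, htrace, hψA, trace_vecMulVec, dotProduct_comm (A _ *ᵥ ψ),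
      vN_inv_smul_vecMulVec_self_star, mul_zero, Finset.sum_const_zero, hvN]
    ring
end

section
/- Let {E_i = |φ_i⟩⟨φ_i|}_{i=1}^n be a rank-1 POVM on a d-dimensional Hilbert space such that no effect is a projector, i.e., ⟨φ_i|φ_i⟩ < 1 for all i. Then for every density matrix ρ, H({p_i(ρ)}) > S(ρ), where p_i(ρ) = ⟨φ_i|ρ|φ_i⟩. Consequently C_rel(ρ, E) = H({p_i(ρ)}) − S(ρ) > 0, so the set of POVM-incoherent states is empty. -/
open Matrix Kronecker Complex ComplexOrder

/-!
Diagonalise `ρ = ∑ₖ λₖ |k⟩⟨k|` and put `cᵢₖ = ⟨k|Eᵢ|k⟩ = |⟨φᵢ|k⟩|²`. Then `pᵢ = ∑ₖ cᵢₖ λₖ`, the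
columns of `c` sum to `1` (because `∑ᵢ Eᵢ = 1`) and its rows sum to `⟨φᵢ|φᵢ⟩ < 1`. Writing
`S(ρ) = ∑ᵢ ∑ₖ cᵢₖ η(λₖ)`, it suffices that `∑ₖ cᵢₖ η(λₖ) ≤ η(pᵢ)` for every `i`, strictly when
`pᵢ > 0`. Since `η` is concave with `η(0) = 0`, Jensen's inequality with the missing weight
`1 - ∑ₖ cᵢₖ` put at `0` gives the weak inequality; for the strict one, Jensen with the normalised
weights gives `∑ₖ cᵢₖ η(λₖ) ≤ s η(p / s) = η(p) - (p / s) η(s)` with `s = ∑ₖ cᵢₖ ∈ (0, 1)`.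
-/

namespace Real

variable {ι κ : Type*}

lemma sum_mul_negMulLog_le_negMulLog_sum_s13 {t : Finset ι} {c x : ι → ℝ}
    (hc : ∀ k ∈ t, 0 ≤ c k) (hx : ∀ k ∈ t, 0 ≤ x k) (hs : ∑ k ∈ t, c k ≤ 1) :
    ∑ k ∈ t, c k * negMulLog (x k) ≤ negMulLog (∑ k ∈ t, c k * x k) := by
  simpa using concaveOn_negMulLog.map_add_sum_le hc (by ring)
    (fun k hk => Set.mem_Ici.2 (hx k hk)) (sub_nonneg.2 hs) Set.self_mem_Ici

lemma sum_mul_negMulLog_le_mul_negMulLog_div {t : Finset ι} {c x : ι → ℝ}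
    (hc : ∀ k ∈ t, 0 ≤ c k) (hx : ∀ k ∈ t, 0 ≤ x k) (hs : 0 < ∑ k ∈ t, c k) :
    ∑ k ∈ t, c k * negMulLog (x k) ≤
      (∑ k ∈ t, c k) * negMulLog ((∑ k ∈ t, c k * x k) / ∑ k ∈ t, c k) := by
  have jensen := strictConcaveOn_negMulLog.concaveOn.le_map_centerMass hc hs
    (p := x) fun k hk => Set.mem_Ici.mpr (hx k hk)
  simp only [Finset.centerMass, Function.comp_apply, smul_eq_mul] at jensen
  rw [inv_mul_eq_div, inv_mul_eq_div, div_le_iff₀ hs] at jensen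
  linarith

lemma sum_mul_negMulLog_lt_negMulLog_sum {t : Finset ι} {c x : ι → ℝ}
    (hc : ∀ k ∈ t, 0 ≤ c k) (hx : ∀ k ∈ t, 0 ≤ x k) (hs : ∑ k ∈ t, c k < 1)
    (hp : 0 < ∑ k ∈ t, c k * x k) :
    ∑ k ∈ t, c k * negMulLog (x k) < negMulLog (∑ k ∈ t, c k * x k) := by
  set s := ∑ k ∈ t, c k
  set p := ∑ k ∈ t, c k * x k
  have hs₀ : 0 < s := by
    obtain ⟨k, hk, hckx⟩ :=
      (Finset.sum_pos_iff_of_nonneg fun k hk => mul_nonneg (hc k hk) (hx k hk)).1 hp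
    exact (Finset.sum_pos_iff_of_nonneg hc).2 ⟨k, hk, pos_of_mul_pos_left hckx (hx k hk)⟩
  have hscale : negMulLog p = p / s * negMulLog s + s * negMulLog (p / s) := by
    rw [← negMulLog_mul, mul_div_cancel₀ p hs₀.ne']
  have hloss : 0 < p / s * negMulLog s :=
    mul_pos (div_pos hp hs₀) (by simpa [negMulLog_eq_neg] using mul_log_neg hs₀ hs)
  linarith [sum_mul_negMulLog_le_mul_negMulLog_div hc hx hs₀]

lemma sum_negMulLog_lt_sum_negMulLog_sum_mul [Fintype ι] [Fintype κ] {c : ι → κ → ℝ}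
    {x : κ → ℝ} (hc : ∀ i k, 0 ≤ c i k) (hx : ∀ k, 0 ≤ x k) (hx₁ : ∑ k, x k = 1)
    (hcol : ∀ k, ∑ i, c i k = 1) (hrow : ∀ i, ∑ k, c i k < 1) :
    ∑ k, negMulLog (x k) < ∑ i, negMulLog (∑ k, c i k * x k) := by
  have hmass (f : κ → ℝ) : ∑ i, ∑ k, c i k * f k = ∑ k, f k := by
    rw [Finset.sum_comm]
    simp only [← Finset.sum_mul, hcol, one_mul]
  obtain ⟨i₀, -, hi₀⟩ : ∃ i ∈ Finset.univ, (0 : ℝ) < ∑ k, c i k * x k :=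
    Finset.exists_lt_of_sum_lt (by simp [hmass, hx₁])
  rw [← hmass]
  exact Finset.sum_lt_sum
    (fun i _ => sum_mul_negMulLog_le_negMulLog_sum_s13 (fun k _ => hc i k) (fun k _ => hx k)
      (hrow i).le)
    ⟨i₀, Finset.mem_univ _, sum_mul_negMulLog_lt_negMulLog_sum (fun k _ => hc i₀ k)
      (fun k _ => hx k) (hrow i₀) hi₀⟩

end Real

namespace Matrix

variable {R 𝕜 n : Type*} [Fintype n]

lemma trace_mul_vecMulVec [CommSemiring R] (A : Matrix n n R) (v w : n → R) :
    (A * vecMulVec v w).trace = w ⬝ᵥ A *ᵥ v := by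
  rw [mul_vecMulVec, trace_vecMulVec, dotProduct_comm]

namespace IsHermitian

variable [RCLike 𝕜] [DecidableEq n] {A : Matrix n n 𝕜} (hA : A.IsHermitian)

/-- `⟨k|E|k⟩` for the eigenvectors `|k⟩` of `A`. -/
noncomputable def eigenbasisDiag (E : Matrix n n 𝕜) (k : n) : ℝ :=
  RCLike.re ((star (hA.eigenvectorUnitary : Matrix n n 𝕜) * E * hA.eigenvectorUnitary) k k)

lemma re_trace_mul_eq_sum_eigenbasisDiag_mul (E : Matrix n n 𝕜) :
    RCLike.re (A * E).trace = ∑ k, hA.eigenbasisDiag E k * hA.eigenvalues k := by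
  conv_lhs => rw [hA.spectral_theorem, Unitary.conjStarAlgAut_apply]
  rw [Matrix.mul_assoc, trace_mul_cycle, trace_mul_comm]
  simp [trace, diagonal_mul, eigenbasisDiag, mul_comm]

lemma eigenbasisDiag_nonneg {E : Matrix n n 𝕜} (hE : E.PosSemidef) (k : n) :
    0 ≤ hA.eigenbasisDiag E k :=
  (RCLike.nonneg_iff.mp (hE.conjTranspose_mul_mul_same _).diag_nonneg).1

lemma sum_eigenbasisDiag (E : Matrix n n 𝕜) :
    ∑ k, hA.eigenbasisDiag E k = RCLike.re E.trace := by
  calc ∑ k, hA.eigenbasisDiag E k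
      = RCLike.re (star (hA.eigenvectorUnitary : Matrix n n 𝕜) * E *
          hA.eigenvectorUnitary).trace := by
        simp [eigenbasisDiag, trace]
    _ = RCLike.re E.trace := by
        rw [trace_mul_cycle, Unitary.mul_star_self_of_mem hA.eigenvectorUnitary.2, Matrix.one_mul]

lemma sum_eigenbasisDiag_of_sum_eq_one {ι : Type*} [Fintype ι] {E : ι → Matrix n n 𝕜}
    (hE : ∑ i, E i = 1) (k : n) : ∑ i, hA.eigenbasisDiag (E i) k = 1 := by
  simp only [eigenbasisDiag, ← map_sum, ← Matrix.sum_apply, ← Finset.sum_mul, ← Finset.mul_sum,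
    hE, Matrix.mul_one, Unitary.star_mul_self_of_mem hA.eigenvectorUnitary.2, one_apply_eq,
    RCLike.one_re]

end IsHermitian

end Matrix

/-- For a rank-1 POVM {|φ_i⟩⟨φ_i|} in which no effect is a
projector (⟨φ_i|φ_i⟩ < 1 for all i), every density matrix satisfies
H({p_i(ρ)}) > S(ρ), hence C_rel(ρ,E) = H({p_i(ρ)}) − S(ρ) > 0 and no
POVM-incoherent state exists. -/
theorem rank_one_povm_no_incoherent_states (d n : ℕ)
    (φ : Fin n → Fin d → ℂ)
    (hsum : ∑ i, Matrix.vecMulVec (φ i) (star (φ i)) = 1)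
    (hsub : ∀ i, (star (φ i) ⬝ᵥ φ i).re < 1)
    (ρ : Matrix (Fin d) (Fin d) ℂ) (hρ : ρ.PosSemidef) (htr : ρ.trace = 1) :
    vN ρ < ∑ i, Real.negMulLog ((star (φ i) ⬝ᵥ ρ *ᵥ φ i).re) := by
  have hH := hρ.isHermitian
  have hp (i : Fin n) : (star (φ i) ⬝ᵥ ρ *ᵥ φ i).re =
      ∑ k, hH.eigenbasisDiag (vecMulVec (φ i) (star (φ i))) k * hH.eigenvalues k := by
    rw [← trace_mul_vecMulVec, ← hH.re_trace_mul_eq_sum_eigenbasisDiag_mul]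
    rfl
  have hrow (i : Fin n) : ∑ k, hH.eigenbasisDiag (vecMulVec (φ i) (star (φ i))) k < 1 := by
    rw [hH.sum_eigenbasisDiag, trace_vecMulVec, dotProduct_comm]
    exact hsub i
  have htr_eig : ∑ k, hH.eigenvalues k = 1 := by
    have h := hH.trace_eq_sum_eigenvalues.symm.trans htr
    rw [← RCLike.ofReal_sum, ← RCLike.ofReal_one] at h
    exact RCLike.ofReal_injective h
  rw [vN, dif_pos hH]
  simp only [hp]
  exact Real.sum_negMulLog_lt_sum_negMulLog_sum_mul
    (fun i => hH.eigenbasisDiag_nonneg (posSemidef_vecMulVec_self_star (φ i)))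
    hρ.eigenvalues_nonneg htr_eig (hH.sum_eigenbasisDiag_of_sum_eq_one hsum) hrow
end

section
/- The Shannon entropy of outcome probabilities of a rank-1 POVM is at least the von Neumann entropy of the state: for any rank-1 POVM {|φ_i⟩⟨φ_i|} and any density matrix ρ, H({⟨φ_i|ρ|φ_i⟩}) ≥ S(ρ). -/
open Matrix Kronecker Complex ComplexOrder

lemma scale_negMulLog {s x : ℝ} (hs0 : 0 ≤ s) (hs1 : s ≤ 1) (hx : 0 ≤ x) :
    s * Real.negMulLog x ≤ Real.negMulLog (s * x) := by
  rcases eq_or_lt_of_le hs0 with h | h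
  · simp [← h]
  rcases eq_or_lt_of_le hx with h' | h'
  · simp [← h', Real.negMulLog]
  · rw [Real.negMulLog, Real.negMulLog, Real.log_mul (ne_of_gt h) (ne_of_gt h')]
    have hlog : Real.log s ≤ 0 := Real.log_nonpos (le_of_lt h) hs1
    nlinarith [mul_nonneg (le_of_lt h) (le_of_lt h')]

lemma jensen_aux {m : ℕ} (c lam : Fin m → ℝ) (hc : ∀ k, 0 ≤ c k)
    (hl : ∀ k, 0 ≤ lam k) (hs : ∑ k, c k ≤ 1) :
    ∑ k, c k * Real.negMulLog (lam k) ≤ Real.negMulLog (∑ k, c k * lam k) := by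
  set s := ∑ k, c k with hsdef
  have hs0 : 0 ≤ s := Finset.sum_nonneg fun k _ => hc k
  rcases eq_or_lt_of_le hs0 with h0 | h0
  · have hz : ∀ k ∈ Finset.univ, c k = 0 :=
      (Finset.sum_eq_zero_iff_of_nonneg fun k _ => hc k).1 h0.symm
    have h1 : ∀ k ∈ Finset.univ, c k * Real.negMulLog (lam k) = 0 := fun k hk => by
      rw [hz k hk, zero_mul]
    rw [Finset.sum_congr rfl h1]
    have h2 : ∑ k, c k * lam k = 0 :=
      Finset.sum_eq_zero fun k hk => by rw [hz k hk, zero_mul]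
    rw [h2]
    simp
  · set w : Fin m → ℝ := fun k => c k / s with hwdef
    have hw1 : ∑ k, w k = 1 := by
      rw [hwdef]; simp only; rw [← Finset.sum_div, ← hsdef, div_self (ne_of_gt h0)]
    have hwn : ∀ k ∈ Finset.univ, (0:ℝ) ≤ w k := fun k _ => div_nonneg (hc k) hs0
    have hjen : ∑ k, w k • Real.negMulLog (lam k) ≤ Real.negMulLog (∑ k, w k • lam k) :=
      Real.concaveOn_negMulLog.le_map_sum hwn hw1 (fun k _ => hl k)
    have hx : 0 ≤ ∑ k, w k • lam k :=
      Finset.sum_nonneg fun k hk => smul_nonneg (hwn k hk) (hl k)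
    have hscale := scale_negMulLog hs0 hs hx
    have hrw : ∀ f : Fin m → ℝ, s * ∑ k, w k • f k = ∑ k, c k * f k := by
      intro f
      rw [Finset.mul_sum]
      refine Finset.sum_congr rfl fun k _ => ?_
      rw [smul_eq_mul, hwdef]
      field_simp
    calc ∑ k, c k * Real.negMulLog (lam k)
        = s * ∑ k, w k • Real.negMulLog (lam k) := (hrw _).symm
      _ ≤ s * Real.negMulLog (∑ k, w k • lam k) :=
          mul_le_mul_of_nonneg_left hjen hs0
      _ ≤ Real.negMulLog (s * ∑ k, w k • lam k) := hscale
      _ = Real.negMulLog (∑ k, c k * lam k) := by rw [hrw]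

/-- For any rank-1 POVM {|φ_i⟩⟨φ_i|} and any density matrix ρ,
the Shannon entropy of the outcome probabilities is at least the von Neumann
entropy: H({⟨φ_i|ρ|φ_i⟩}) ≥ S(ρ). -/
theorem shannon_ge_vonNeumann (d n : ℕ)
    (φ : Fin n → Fin d → ℂ)
    (hsum : ∑ i, Matrix.vecMulVec (φ i) (star (φ i)) = 1)
    (ρ : Matrix (Fin d) (Fin d) ℂ) (hρ : ρ.PosSemidef) (htr : ρ.trace = 1) :
    vN ρ ≤ ∑ i, Real.negMulLog ((star (φ i) ⬝ᵥ ρ *ᵥ φ i).re) := by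
  have hH : ρ.IsHermitian := hρ.1
  set lam : Fin d → ℝ := hH.eigenvalues with hlam
  have hlamnn : ∀ k, 0 ≤ lam k := fun k => hρ.eigenvalues_nonneg k
  set U : Matrix (Fin d) (Fin d) ℂ := (hH.eigenvectorUnitary : Matrix (Fin d) (Fin d) ℂ)
    with hU
  have hUU : star U * U = 1 := Matrix.mem_unitaryGroup_iff'.mp (hH.eigenvectorUnitary).2
  have hUU' : U * star U = 1 := Matrix.mem_unitaryGroup_iff.mp (hH.eigenvectorUnitary).2
  have hspec : ρ = U * diagonal (RCLike.ofReal ∘ lam) * star U := hH.spectral_theorem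
  set ψ : Fin n → Fin d → ℂ := fun i => star U *ᵥ φ i with hψ
  -- entries of the POVM completeness relation
  have hentry : ∀ a b, (∑ i, φ i a * (starRingEnd ℂ) (φ i b))
      = (1 : Matrix (Fin d) (Fin d) ℂ) a b := by
    intro a b
    have h := congrFun (congrFun hsum a) b
    simpa [Matrix.sum_apply, Matrix.vecMulVec_apply] using h
  have hψk : ∀ i k, ψ i k = ∑ a, (starRingEnd ℂ) (U a k) * φ i a := by
    intro i k
    simp [hψ, Matrix.mulVec, dotProduct, Matrix.star_apply, RCLike.star_def]
  -- outcome probabilities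
  have key : ∀ i, star (φ i) ⬝ᵥ ρ *ᵥ φ i
      = ∑ k, (Complex.normSq (ψ i k) : ℂ) * (lam k : ℂ) := by
    intro i
    rw [hspec]
    rw [← Matrix.mulVec_mulVec, ← Matrix.mulVec_mulVec]
    rw [Matrix.dotProduct_mulVec]
    have h1 : star (φ i) ᵥ* U = star (ψ i) := by
      rw [hψ]
      simp only
      rw [Matrix.star_mulVec, Matrix.star_eq_conjTranspose,
        Matrix.conjTranspose_conjTranspose]
    rw [h1, show star U *ᵥ φ i = ψ i from rfl]
    simp only [Matrix.mulVec_diagonal, dotProduct, Pi.star_apply]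
    refine Finset.sum_congr rfl fun k _ => ?_
    rw [Complex.normSq_eq_conj_mul_self]
    rw [show (RCLike.ofReal ∘ lam) k = ((lam k : ℝ) : ℂ) from rfl]
    simp only [RCLike.star_def]
    ring
  -- column sums equal one
  have hcolC : ∀ k, ∑ i, (starRingEnd ℂ) (ψ i k) * ψ i k = 1 := by
    intro k
    calc ∑ i, (starRingEnd ℂ) (ψ i k) * ψ i k
        = ∑ i, ∑ b, ∑ a, (U b k * (starRingEnd ℂ) (φ i b))
            * ((starRingEnd ℂ) (U a k) * φ i a) := by
          refine Finset.sum_congr rfl fun i _ => ?_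
          rw [hψk i k, map_sum, Finset.sum_mul_sum]
          refine Finset.sum_congr rfl fun b _ => Finset.sum_congr rfl fun a _ => ?_
          simp only [_root_.map_mul, Complex.conj_conj]
      _ = ∑ b, ∑ a, (U b k * (starRingEnd ℂ) (U a k))
            * ∑ i, φ i a * (starRingEnd ℂ) (φ i b) := by
          rw [Finset.sum_comm]
          refine Finset.sum_congr rfl fun b _ => ?_
          rw [Finset.sum_comm]
          refine Finset.sum_congr rfl fun a _ => ?_
          rw [Finset.mul_sum]
          exact Finset.sum_congr rfl fun i _ => by ring
      _ = ∑ b, ∑ a, (U b k * (starRingEnd ℂ) (U a k))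
            * (1 : Matrix (Fin d) (Fin d) ℂ) a b := by
          exact Finset.sum_congr rfl fun b _ => Finset.sum_congr rfl fun a _ => by
            rw [hentry a b]
      _ = ∑ b, U b k * (starRingEnd ℂ) (U b k) := by
          refine Finset.sum_congr rfl fun b _ => ?_
          simp [Matrix.one_apply, Finset.sum_ite_eq, mul_ite]
      _ = 1 := by
          have h := congrFun (congrFun hUU k) k
          simp only [Matrix.mul_apply, Matrix.star_apply, Matrix.one_apply_eq,
            RCLike.star_def] at h
          rw [← h]
          exact Finset.sum_congr rfl fun b _ => by ring
  have hcol : ∀ k, ∑ i, Complex.normSq (ψ i k) = 1 := by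
    intro k
    have h := hcolC k
    have h2 : ((∑ i, Complex.normSq (ψ i k) : ℝ) : ℂ) = 1 := by
      push_cast
      rw [← h]
      exact Finset.sum_congr rfl fun i _ => Complex.normSq_eq_conj_mul_self
    exact_mod_cast h2
  -- norm preservation
  have hselfv : ∀ v : Fin d → ℂ, star v ⬝ᵥ v = ((∑ a, Complex.normSq (v a) : ℝ) : ℂ) := by
    intro v
    push_cast
    simp only [dotProduct, Pi.star_apply, RCLike.star_def]
    exact Finset.sum_congr rfl fun a _ => by rw [Complex.normSq_eq_conj_mul_self]
  have hrowC : ∀ i, star (ψ i) ⬝ᵥ ψ i = star (φ i) ⬝ᵥ φ i := by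
    intro i
    rw [hψ]
    simp only
    rw [Matrix.star_mulVec, Matrix.star_eq_conjTranspose, Matrix.conjTranspose_conjTranspose,
      ← Matrix.dotProduct_mulVec, Matrix.mulVec_mulVec,
      show U * Uᴴ = 1 from hUU', Matrix.one_mulVec]
  have hrow : ∀ i, ∑ k, Complex.normSq (ψ i k) = ∑ a, Complex.normSq (φ i a) := by
    intro i
    have h := hrowC i
    rw [hselfv, hselfv] at h
    exact_mod_cast h
  -- subnormalization of the vectors
  have hdot : ∀ i j, star (φ i) ⬝ᵥ φ j = (starRingEnd ℂ) (star (φ j) ⬝ᵥ φ i) := by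
    intro i j
    simp only [dotProduct, Pi.star_apply, map_sum, _root_.map_mul, Complex.conj_conj,
      RCLike.star_def]
    exact Finset.sum_congr rfl fun a _ => by ring
  have hdecomp : ∀ i, ∑ j, (star (φ i) ⬝ᵥ φ j) * (star (φ j) ⬝ᵥ φ i)
      = star (φ i) ⬝ᵥ φ i := by
    intro i
    calc ∑ j, (star (φ i) ⬝ᵥ φ j) * (star (φ j) ⬝ᵥ φ i)
        = ∑ j, ∑ a, ∑ b, ((starRingEnd ℂ) (φ i a) * φ j a)
            * ((starRingEnd ℂ) (φ j b) * φ i b) := by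
          refine Finset.sum_congr rfl fun j _ => ?_
          simp only [dotProduct, Pi.star_apply, RCLike.star_def]
          rw [Finset.sum_mul_sum]
      _ = ∑ a, ∑ b, ((starRingEnd ℂ) (φ i a) * φ i b)
            * ∑ j, φ j a * (starRingEnd ℂ) (φ j b) := by
          rw [Finset.sum_comm]
          refine Finset.sum_congr rfl fun a _ => ?_
          rw [Finset.sum_comm]
          refine Finset.sum_congr rfl fun b _ => ?_
          rw [Finset.mul_sum]
          exact Finset.sum_congr rfl fun j _ => by ring
      _ = ∑ a, ∑ b, ((starRingEnd ℂ) (φ i a) * φ i b)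
            * (1 : Matrix (Fin d) (Fin d) ℂ) a b := by
          exact Finset.sum_congr rfl fun a _ => Finset.sum_congr rfl fun b _ => by
            rw [hentry]
      _ = ∑ a, (starRingEnd ℂ) (φ i a) * φ i a := by
          refine Finset.sum_congr rfl fun a _ => ?_
          simp [Matrix.one_apply, mul_ite]
      _ = star (φ i) ⬝ᵥ φ i := by
          simp [dotProduct, RCLike.star_def]
  have hsub : ∀ i, ∑ a, Complex.normSq (φ i a) ≤ 1 := by
    intro i
    set s : ℝ := ∑ a, Complex.normSq (φ i a) with hsdef
    have hs0 : 0 ≤ s := Finset.sum_nonneg fun a _ => Complex.normSq_nonneg _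
    have hC : ((s : ℝ) : ℂ) = ∑ j, ((Complex.normSq (star (φ j) ⬝ᵥ φ i) : ℝ) : ℂ) := by
      rw [← hselfv (φ i), ← hdecomp i]
      refine Finset.sum_congr rfl fun j _ => ?_
      rw [hdot i j, Complex.normSq_eq_conj_mul_self]
    have hR : s = ∑ j, Complex.normSq (star (φ j) ⬝ᵥ φ i) := by
      exact_mod_cast hC
    have hterm : Complex.normSq (star (φ i) ⬝ᵥ φ i) = s ^ 2 := by
      rw [hselfv (φ i), ← hsdef, Complex.normSq_ofReal]
      ring
    have hle : s ^ 2 ≤ s := by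
      rw [← hterm, hR]
      exact Finset.single_le_sum (f := fun j => Complex.normSq (star (φ j) ⬝ᵥ φ i))
        (fun j _ => Complex.normSq_nonneg _) (Finset.mem_univ i)
    nlinarith
  -- assemble
  have hvN : vN ρ = ∑ k, Real.negMulLog (lam k) := by
    unfold vN
    rw [dif_pos hH]
  rw [hvN]
  calc ∑ k, Real.negMulLog (lam k)
      = ∑ k, (∑ i, Complex.normSq (ψ i k)) * Real.negMulLog (lam k) := by
        refine Finset.sum_congr rfl fun k _ => ?_
        rw [hcol k, one_mul]
    _ = ∑ i, ∑ k, Complex.normSq (ψ i k) * Real.negMulLog (lam k) := by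
        simp_rw [Finset.sum_mul]
        exact Finset.sum_comm
    _ ≤ ∑ i, Real.negMulLog (∑ k, Complex.normSq (ψ i k) * lam k) := by
        refine Finset.sum_le_sum fun i _ => ?_
        refine jensen_aux _ _ (fun k => Complex.normSq_nonneg _) hlamnn ?_
        rw [hrow i]
        exact hsub i
    _ = ∑ i, Real.negMulLog ((star (φ i) ⬝ᵥ ρ *ᵥ φ i).re) := by
        refine Finset.sum_congr rfl fun i _ => ?_
        congr 1
        rw [key i]
        push_cast
        rw [Complex.re_sum]
        refine Finset.sum_congr rfl fun k _ => ?_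
        simp
end

section
/- Let P and P̃ be two Naimark extensions of the same POVM E = {E_i}, with projectors P_i on H' and P̃_i on H̃' ⊆ H', both compressing to E_i ⊕ 0 on the embedded subspace: Π_E P_i Π_E = E_i ⊕ 0 = Π_E P̃_i Π_E. Then for each i there exists a unitary Q_i on H' such that P_i Π_E = Q_i P̃_i Π_E, and there is a single block-diagonal unitary Q with P_i Π_E = Q P̃_i Π_E for all i. Consequently Δ[ρ ⊕ 0] = Q Δ̃[ρ ⊕ 0] Q† for every state ρ, so S(Δ[ρ ⊕ 0]) = S(Δ̃[ρ ⊕ 0]) and the relative entropy of POVM-based coherence is independent of the choice of Naimark extension. -/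
/-!
Stack the compressions `P i Π` (resp. `P̃ i Π`) side by side into one rectangular matrix `A`
(resp. `B`). Orthogonality of the projections and the common compression `Π P i Π = E i ⊕ 0`
give `Aᴴ A = Bᴴ B`, so `B x ↦ A x` is a well-defined isometry from `range B` onto `range A`;
extending it to a unitary `Q` of the whole space yields `P i Π = Q P̃ i Π` for all `i` at once.
Since `ρ ⊕ 0 = Π (ρ ⊕ 0) Π`, each dephased block `P i (ρ ⊕ 0) P i` is `Q` conjugating
`P̃ i (ρ ⊕ 0) P̃ i`, and von Neumann entropy is invariant under unitary conjugation because the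
characteristic polynomial, hence the spectrum, is.
-/

open Matrix Kronecker Complex ComplexOrder

/-- Embedding X ↦ X ⊕ 0 of a d×d matrix into the upper-left corner of a
d'×d' matrix. -/
def emb {d d' : ℕ} (X : Matrix (Fin d) (Fin d) ℂ) : Matrix (Fin d') (Fin d') ℂ :=
  fun i j => if hi : (i : ℕ) < d then if hj : (j : ℕ) < d then X ⟨i, hi⟩ ⟨j, hj⟩ else 0 else 0

section UnitaryOfGram

variable {𝕜 m n : Type*} [RCLike 𝕜] [Fintype m] [DecidableEq m] [Fintype n] [DecidableEq n]

theorem Matrix.inner_toEuclideanLin_toEuclideanLin (A : Matrix m n 𝕜)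
    (x y : EuclideanSpace 𝕜 n) :
    inner 𝕜 (toEuclideanLin A x) (toEuclideanLin A y) =
      inner 𝕜 x (toEuclideanLin (Aᴴ * A) y) := by
  rw [toLpLin_mul_same, LinearMap.comp_apply, toEuclideanLin_conjTranspose_eq_adjoint,
    LinearMap.adjoint_inner_right]

theorem Matrix.norm_toEuclideanLin_eq_of_conjTranspose_mul_self_eq {A B : Matrix m n 𝕜}
    (h : Aᴴ * A = Bᴴ * B) (x : EuclideanSpace 𝕜 n) :
    ‖toEuclideanLin A x‖ = ‖toEuclideanLin B x‖ := by
  rw [norm_eq_sqrt_re_inner (𝕜 := 𝕜), norm_eq_sqrt_re_inner (𝕜 := 𝕜),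
    inner_toEuclideanLin_toEuclideanLin, inner_toEuclideanLin_toEuclideanLin, h]

theorem LinearMap.exists_linearIsometryEquiv_apply_eq_of_norm_eq {E F : Type*}
    [NormedAddCommGroup E] [InnerProductSpace 𝕜 E] [NormedAddCommGroup F]
    [InnerProductSpace 𝕜 F] [FiniteDimensional 𝕜 F] {a b : E →ₗ[𝕜] F}
    (h : ∀ x, ‖a x‖ = ‖b x‖) : ∃ U : F ≃ₗᵢ[𝕜] F, ∀ x, U (b x) = a x := by
  have hker : LinearMap.ker b ≤ LinearMap.ker a := fun x hx => by
    rw [LinearMap.mem_ker, ← norm_eq_zero, h, norm_eq_zero, ← LinearMap.mem_ker]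
    exact hx
  let f : LinearMap.range b →ₗ[𝕜] F :=
    (LinearMap.ker b).liftQ a hker ∘ₗ b.quotKerEquivRange.symm
  have hf : ∀ x, f ⟨b x, LinearMap.mem_range_self b x⟩ = a x := fun x => by
    simp [f, LinearMap.quotKerEquivRange_symm_apply_image]
  let L : LinearMap.range b →ₗᵢ[𝕜] F :=
    { toLinearMap := f
      norm_map' := by rintro ⟨_, x, rfl⟩; simp [hf, h] }
  exact ⟨L.extend.toLinearIsometryEquiv rfl, fun x =>
    (L.extend_apply ⟨b x, LinearMap.mem_range_self b x⟩).trans (hf x)⟩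

theorem Matrix.exists_mem_unitaryGroup_eq_mul_of_conjTranspose_mul_self_eq
    {A B : Matrix m n 𝕜} (h : Aᴴ * A = Bᴴ * B) : ∃ Q ∈ unitaryGroup m 𝕜, A = Q * B := by
  obtain ⟨U, hU⟩ := LinearMap.exists_linearIsometryEquiv_apply_eq_of_norm_eq
    (norm_toEuclideanLin_eq_of_conjTranspose_mul_self_eq h)
  let b := EuclideanSpace.basisFun m 𝕜
  refine ⟨LinearMap.toMatrix b.toBasis b.toBasis U.toLinearEquiv,
    U.toMatrix_mem_unitaryGroup b b, toEuclideanLin.injective ?_⟩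
  have hQ : toEuclideanLin (LinearMap.toMatrix b.toBasis b.toBasis U.toLinearEquiv) =
      U.toLinearEquiv.toLinearMap := by
    rw [toEuclideanLin_eq_toLin_orthonormal, toLin_toMatrix]
  ext x : 1
  rw [toLpLin_mul_same, LinearMap.comp_apply, hQ]
  exact (hU x).symm

theorem Matrix.exists_mem_unitaryGroup_forall_eq_mul_of_conjTranspose_mul_eq
    {κ : Type*} [Fintype κ] [DecidableEq κ] {A B : κ → Matrix m n 𝕜}
    (h : ∀ i j, (A i)ᴴ * A j = (B i)ᴴ * B j) :
    ∃ Q ∈ unitaryGroup m 𝕜, ∀ i, A i = Q * B i := by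
  let stack (C : κ → Matrix m n 𝕜) : Matrix m (κ × n) 𝕜 := of fun x p => C p.1 x p.2
  obtain ⟨Q, hQ, hAB⟩ := exists_mem_unitaryGroup_eq_mul_of_conjTranspose_mul_self_eq
    (A := stack A) (B := stack B) (by
      ext p q
      simpa [stack, mul_apply] using congrFun (congrFun (h p.1 q.1) p.2) q.2)
  refine ⟨Q, hQ, fun i => ?_⟩
  ext x k
  simpa [stack, mul_apply] using congrFun (congrFun hAB x) (i, k)

end UnitaryOfGram

section Projections

variable {𝕜 m ι : Type*} [RCLike 𝕜] [Fintype m]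

theorem Matrix.conjTranspose_mul_mul_eq_ite_of_orthogonal [DecidableEq ι]
    {P : ι → Matrix m m 𝕜} (hP : ∀ i, (P i).IsHermitian)
    (horth : ∀ i j, P i * P j = if i = j then P i else 0) (R : Matrix m m 𝕜) (i j : ι) :
    (P i * R)ᴴ * (P j * R) = if i = j then Rᴴ * P i * R else 0 := by
  rw [conjTranspose_mul, (hP i).eq,
    show Rᴴ * P i * (P j * R) = Rᴴ * (P i * P j) * R by simp only [Matrix.mul_assoc], horth]
  split_ifs <;> simp

theorem Matrix.mul_mul_eq_conj_of_mul_eq {P P' Q R X : Matrix m m 𝕜} (hP : P.IsHermitian)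
    (hP' : P'.IsHermitian) (hX : R * X * Rᴴ = X) (h : P * R = Q * (P' * R)) :
    P * X * P = Q * (P' * X * P') * Qᴴ := by
  calc P * X * P = P * R * X * (P * R)ᴴ := by
        conv_lhs => rw [← hX]
        rw [conjTranspose_mul, hP.eq]
        simp only [Matrix.mul_assoc]
    _ = Q * (P' * (R * X * Rᴴ) * P') * Qᴴ := by
        rw [h, conjTranspose_mul, conjTranspose_mul, hP'.eq]
        simp only [Matrix.mul_assoc]
    _ = Q * (P' * X * P') * Qᴴ := by rw [hX]

end Projections

theorem Matrix.isHermitian_mul_mul_conjTranspose_iff {𝕜 ι : Type*} [RCLike 𝕜] [Fintype ι]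
    [DecidableEq ι] {Q : Matrix ι ι 𝕜} (hQ : Q ∈ unitaryGroup ι 𝕜) {M : Matrix ι ι 𝕜} :
    (Q * M * Qᴴ).IsHermitian ↔ M.IsHermitian := by
  refine ⟨fun h => ?_, isHermitian_mul_mul_conjTranspose Q⟩
  have hQQ : Qᴴ * Q = 1 := Unitary.star_mul_self_of_mem hQ
  have hM : Qᴴ * (Q * M * Qᴴ) * Q = M := by
    simp only [Matrix.mul_assoc, hQQ, Matrix.mul_one]
    simp only [← Matrix.mul_assoc, hQQ, Matrix.one_mul]
  exact hM ▸ isHermitian_conjTranspose_mul_mul Q h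

theorem vN_mul_mul_conjTranspose {ι : Type*} [Fintype ι] [DecidableEq ι] {Q : Matrix ι ι ℂ}
    (hQ : Q ∈ unitaryGroup ι ℂ) (M : Matrix ι ι ℂ) : vN (Q * M * Qᴴ) = vN M := by
  by_cases hM : M.IsHermitian
  · have hQM := isHermitian_mul_mul_conjTranspose Q hM
    have hcharpoly : (Q * M * Qᴴ).charpoly = M.charpoly := by
      have hQQ : Qᴴ * Q = 1 := Unitary.star_mul_self_of_mem hQ
      rw [charpoly_mul_comm, ← Matrix.mul_assoc, hQQ, Matrix.one_mul]
    rw [vN, vN, dif_pos hQM, dif_pos hM, (hQM.eigenvalues_eq_eigenvalues_iff hM).mpr hcharpoly]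
  · rw [vN, vN, dif_neg (mt (isHermitian_mul_mul_conjTranspose_iff hQ).mp hM), dif_neg hM]

section Embedding

variable {d d' : ℕ}

theorem emb_conjTranspose (X : Matrix (Fin d) (Fin d) ℂ) :
    (emb X : Matrix (Fin d') (Fin d') ℂ)ᴴ = emb Xᴴ := by
  ext i j
  by_cases hi : (i : ℕ) < d <;> by_cases hj : (j : ℕ) < d <;> simp [emb, hi, hj]

theorem emb_one_mul_emb (X : Matrix (Fin d) (Fin d) ℂ) :
    (emb (1 : Matrix (Fin d) (Fin d) ℂ) : Matrix (Fin d') (Fin d') ℂ) * emb X = emb X := by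
  ext i j
  by_cases hi : (i : ℕ) < d
  · rw [mul_apply, Finset.sum_eq_single i (fun k _ hk => by
      simp [emb, one_apply, Fin.ext_iff, Ne.symm (Fin.val_ne_of_ne hk)]) (by simp)]
    simp [emb, hi]
  · simp [emb, hi, mul_apply]

theorem emb_mul_emb_one (X : Matrix (Fin d) (Fin d) ℂ) :
    emb X * (emb (1 : Matrix (Fin d) (Fin d) ℂ) : Matrix (Fin d') (Fin d') ℂ) = emb X := by
  simpa [emb_conjTranspose] using congrArg conjTranspose (emb_one_mul_emb (d' := d') Xᴴ)

end Embedding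

theorem naimark_independence_general (d d' n : ℕ)
    (E : Fin n → Matrix (Fin d) (Fin d) ℂ)
    (P Pt : Fin n → Matrix (Fin d') (Fin d') ℂ)
    (hPHerm : ∀ i, (P i).IsHermitian)
    (hPorth : ∀ i j, P i * P j = if i = j then P i else 0)
    (hPtHerm : ∀ i, (Pt i).IsHermitian)
    (hPtorth : ∀ i j, Pt i * Pt j = if i = j then Pt i else 0)
    (hcomp : ∀ i, (emb (1 : Matrix (Fin d) (Fin d) ℂ)) * P i *
      (emb (1 : Matrix (Fin d) (Fin d) ℂ)) = emb (E i))
    (hcompt : ∀ i, (emb (1 : Matrix (Fin d) (Fin d) ℂ)) * Pt i *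
      (emb (1 : Matrix (Fin d) (Fin d) ℂ)) = emb (E i)) :
    (∀ i, ∃ Qi : Matrix (Fin d') (Fin d') ℂ, Qiᴴ * Qi = 1 ∧
      P i * emb (1 : Matrix (Fin d) (Fin d) ℂ) =
        Qi * (Pt i * emb (1 : Matrix (Fin d) (Fin d) ℂ))) ∧
    ∃ Q : Matrix (Fin d') (Fin d') ℂ, Qᴴ * Q = 1 ∧
      (∀ i, P i * emb (1 : Matrix (Fin d) (Fin d) ℂ) =
        Q * (Pt i * emb (1 : Matrix (Fin d) (Fin d) ℂ))) ∧
      (∀ ρ : Matrix (Fin d) (Fin d) ℂ, ρ.PosSemidef → ρ.trace = 1 →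
        (∑ i, P i * emb ρ * P i) = Q * (∑ i, Pt i * emb ρ * Pt i) * Qᴴ ∧
        vN (∑ i, P i * emb ρ * P i) = vN (∑ i, Pt i * emb ρ * Pt i)) := by
  set proj : Matrix (Fin d') (Fin d') ℂ := emb (1 : Matrix (Fin d) (Fin d) ℂ)
  have hproj : projᴴ = proj := by rw [emb_conjTranspose, conjTranspose_one]
  obtain ⟨Q, hQ, hPQ⟩ := exists_mem_unitaryGroup_forall_eq_mul_of_conjTranspose_mul_eq
    (A := fun i => P i * proj) (B := fun i => Pt i * proj) fun i j => by
      rw [conjTranspose_mul_mul_eq_ite_of_orthogonal hPHerm hPorth,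
        conjTranspose_mul_mul_eq_ite_of_orthogonal hPtHerm hPtorth, hproj, hcomp, hcompt]
  have hQQ : Qᴴ * Q = 1 := Unitary.star_mul_self_of_mem hQ
  refine ⟨fun i => ⟨Q, hQQ, hPQ i⟩, Q, hQQ, hPQ, fun ρ _ _ => ?_⟩
  have hρ : proj * emb ρ * projᴴ = emb ρ := by rw [hproj, emb_one_mul_emb, emb_mul_emb_one]
  have hdephase : ∑ i, P i * emb ρ * P i = Q * (∑ i, Pt i * emb ρ * Pt i) * Qᴴ := by
    rw [Finset.mul_sum, Finset.sum_mul]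
    exact Finset.sum_congr rfl fun i _ =>
      mul_mul_eq_conj_of_mul_eq (hPHerm i) (hPtHerm i) hρ (hPQ i)
  refine ⟨hdephase, ?_⟩
  rw [hdephase]
  exact vN_mul_mul_conjTranspose hQ _

/-- If P and P̃ are two Naimark extensions of the same POVM {E_i},
both compressing to E_i ⊕ 0 on the embedded subspace (Π P_i Π = E_i ⊕ 0 = Π P̃_i Π,
Π = 1_d ⊕ 0), then for each i there is a unitary Q_i with P_i Π = Q_i P̃_i Π, and a
single unitary Q with P_i Π = Q P̃_i Π for all i; consequently
Δ[ρ⊕0] = Q Δ̃[ρ⊕0] Q† and S(Δ[ρ⊕0]) = S(Δ̃[ρ⊕0]) for every state ρ, so the relative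
entropy of POVM-based coherence does not depend on the chosen Naimark extension. -/
theorem naimark_independence (d d' n : ℕ) (hd : d ≤ d')
    (E : Fin n → Matrix (Fin d) (Fin d) ℂ)
    (hpos : ∀ i, (E i).PosSemidef) (hsumE : ∑ i, E i = 1)
    (P Pt : Fin n → Matrix (Fin d') (Fin d') ℂ)
    (hPHerm : ∀ i, (P i).IsHermitian)
    (hPorth : ∀ i j, P i * P j = if i = j then P i else 0)
    (hPsum : ∑ i, P i = 1)
    (hPtHerm : ∀ i, (Pt i).IsHermitian)
    (hPtorth : ∀ i j, Pt i * Pt j = if i = j then Pt i else 0)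
    (hPtsub : (∑ i, Pt i) * (emb (1 : Matrix (Fin d) (Fin d) ℂ)) =
      emb (1 : Matrix (Fin d) (Fin d) ℂ))
    (hcomp : ∀ i, (emb (1 : Matrix (Fin d) (Fin d) ℂ)) * P i *
      (emb (1 : Matrix (Fin d) (Fin d) ℂ)) = emb (E i))
    (hcompt : ∀ i, (emb (1 : Matrix (Fin d) (Fin d) ℂ)) * Pt i *
      (emb (1 : Matrix (Fin d) (Fin d) ℂ)) = emb (E i)) :
    (∀ i, ∃ Qi : Matrix (Fin d') (Fin d') ℂ, Qiᴴ * Qi = 1 ∧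
      P i * emb (1 : Matrix (Fin d) (Fin d) ℂ) =
        Qi * (Pt i * emb (1 : Matrix (Fin d) (Fin d) ℂ))) ∧
    ∃ Q : Matrix (Fin d') (Fin d') ℂ, Qᴴ * Q = 1 ∧
      (∀ i, P i * emb (1 : Matrix (Fin d) (Fin d) ℂ) =
        Q * (Pt i * emb (1 : Matrix (Fin d) (Fin d) ℂ))) ∧
      (∀ ρ : Matrix (Fin d) (Fin d) ℂ, ρ.PosSemidef → ρ.trace = 1 →
        (∑ i, P i * emb ρ * P i) = Q * (∑ i, Pt i * emb ρ * Pt i) * Qᴴ ∧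
        vN (∑ i, P i * emb ρ * P i) = vN (∑ i, Pt i * emb ρ * Pt i)) :=
  naimark_independence_general d d' n E P Pt hPHerm hPorth hPtHerm hPtorth hcomp hcompt
end
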